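/- arXiv:2508.12348 — 7 statements merged into one kernel-verified Lean document; each statement's English description precedes it below -/
import Mathlib

section
/- Let X be an S-concave (S ≥ 1), (C,D)-locally semi-convex, Busemann concave complete geodesic space whose Hausdorff dimension equals n ∈ ℕ. Fix p > S + 1 and C' ≥ 2^{2−p}, and suppose that for every x ∈ X there exists r_x > 0 such that for every constant-speed geodesic ξ : [0,1] → B(x, r_x) and every y ∈ B(x, r_x) one has dist(y, ξ(1/2))^p ≤ (1/2)·dist(y, ξ 0)^p + (1/2)·dist(y, ξ 1)^p − (C'/4)·dist(ξ 0, ξ 1)^p. Then for μH[n]-almost every x ∈ X the norm ‖·‖_x on ℝⁿ arising as the pointed Gromov–Hausdorff blow-up limit at x (i.e., such that for every ε > 0 there is r₀ > 0 with an ε-isometry from (X, d/r, x) to (ℝⁿ, ‖·‖_x, 0) for all r ∈ (0, r₀)) is strictly convex and satisfies, for all u, v ∈ ℝⁿ: ‖(u+v)/2‖_x² ≥ (1/2)‖u‖_x² + (1/2)‖v‖_x² − (S/4)‖u−v‖_x², and ‖(u+v)/2‖_x^p ≤ (1/2)‖u‖_x^p + (1/2)‖v‖_x^p − (C'/4)‖u−v‖_x^p.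 -/
/-!
Realise the blow-up norm `N` at `x` along scales `r k → 0` by `ε k`-isometries `F k` with
`ε k → 0`, and lift `u`, `v`, `(u + v) / 2` to points `zu k`, `zv k`, `zw k` whose images
converge to them. Let `m k` be the midpoint of a geodesic from `zu k` to `zv k`. In the
`p`-uniform convexity inequality based at `zw k`, the rescaled distances from `zw k` to `zu k`
and `zv k` tend to `N (u - v) / 2`, so `C' ≥ 2^{2-p}` forces `dist (zw k) (m k) / r k → 0`: the
geodesic midpoints are lifts of `(u + v) / 2`. Rescaling `S`-concavity and `p`-uniform convexity
based at `x` by `r k` and passing to the limit gives the two midpoint inequalities for `N`.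
Strict convexity follows from the second one: if `N (u + v) = N u + N v`, the normalised vectors
are unit vectors whose sum has norm `2`, and the inequality with `C' > 0` forces them to coincide.
-/

open Set Metric MeasureTheory Filter Topology

noncomputable section

variable {X : Type*} [MetricSpace X]

/-- A constant-speed geodesic parametrized on `[0,1]`. -/
def IsConstSpeedGeodesic (γ : ℝ → X) : Prop :=
  ∀ s ∈ Set.Icc (0:ℝ) 1, ∀ t ∈ Set.Icc (0:ℝ) 1,
    dist (γ s) (γ t) = |s - t| * dist (γ 0) (γ 1)

/-- A unit-speed geodesic parametrized on `[a,b]`. -/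
def IsUnitSpeedGeodesicOn (ξ : ℝ → X) (a b : ℝ) : Prop :=
  ∀ s ∈ Set.Icc a b, ∀ t ∈ Set.Icc a b, dist (ξ s) (ξ t) = |s - t|

/-- A geodesic space: any two points are joined by a constant-speed geodesic. -/
def IsGeodesicSpace (X : Type*) [MetricSpace X] : Prop :=
  ∀ x y : X, ∃ γ : ℝ → X, IsConstSpeedGeodesic γ ∧ γ 0 = x ∧ γ 1 = y

/-- `S`-concavity of the squared distance functions. -/
def SConcave (X : Type*) [MetricSpace X] (S : ℝ) : Prop :=
  ∀ (p : X) (γ : ℝ → X), IsConstSpeedGeodesic γ → ∀ t ∈ Set.Icc (0:ℝ) 1,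
    (1 - t) * dist p (γ 0) ^ 2 + t * dist p (γ 1) ^ 2
      - S * t * (1 - t) * dist (γ 0) (γ 1) ^ 2 ≤ dist p (γ t) ^ 2

/-- `(C,D)`-local semi-convexity of the squared distance functions. -/
def LocSemiConvex (X : Type*) [MetricSpace X] (C D : ℝ) : Prop :=
  ∀ (p : X) (γ : ℝ → X), IsConstSpeedGeodesic γ →
    (∀ t ∈ Set.Icc (0:ℝ) 1, dist p (γ t) < D) →
    ∀ t ∈ Set.Icc (0:ℝ) 1,
      dist p (γ t) ^ 2 ≤ (1 - t) * dist p (γ 0) ^ 2 + t * dist p (γ 1) ^ 2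
        + C * t * (1 - t) * dist (γ 0) (γ 1) ^ 2

/-- Busemann concavity: `t ↦ dist (γ t) (η t) / t` is non-increasing for geodesics
with a common starting point. -/
def BusemannConcave (X : Type*) [MetricSpace X] : Prop :=
  ∀ γ η : ℝ → X, IsConstSpeedGeodesic γ → IsConstSpeedGeodesic η → γ 0 = η 0 →
    ∀ s t : ℝ, 0 < s → s ≤ t → t ≤ 1 →
      dist (γ t) (η t) / t ≤ dist (γ s) (η s) / s

/-- The Euclidean comparison angle `∠̃(p, x, q)` at the vertex `x`. -/
def compAngle (p x q : X) : ℝ :=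
  Real.arccos ((dist x p ^ 2 + dist x q ^ 2 - dist p q ^ 2) / (2 * dist x p * dist x q))

/-- `p` is a `(1,δ)`-strainer at `x` with opposite strainer `q`. -/
def IsOneStrainer (S δ : ℝ) (x p q : X) : Prop :=
  p ≠ x ∧ q ≠ x ∧ Real.pi - δ < compAngle p x q ∧
    Real.arccos (1 - S * dist q x / (2 * dist p x)) < δ

/-- The tuple `p` is a `(k,δ)`-strainer at `x` with opposite strainer `q`. -/
def IsStrainer (S C D δ : ℝ) (x : X) {k : ℕ} (p q : Fin k → X) : Prop :=
  (∀ j, IsOneStrainer S δ x (p j) (q j)) ∧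
  (∀ j : Fin k, (j : ℕ) = 0 → dist (p j) x < D) ∧
  ∀ i j : Fin k, i < j →
    Real.arccos (1 - (S + C) * dist (p j) x / (2 * dist (p i) x)) < δ ∧
    |compAngle (p i) x (p j) - Real.pi / 2| < δ ∧
    |compAngle (p i) x (q j) - Real.pi / 2| < δ

/-- The set `A(k,δ)` of `(k,δ)`-strained points. -/
def strainedPoints (X : Type*) [MetricSpace X] (S C D δ : ℝ) (k : ℕ) : Set X :=
  {x : X | ∃ p q : Fin k → X, IsStrainer S C D δ x p q}

/-- The constant `δ_k = k⁻¹ 2^{-2k-1}`. -/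
def strainerDelta (k : ℕ) : ℝ := ((k : ℝ) * 2 ^ (2 * k + 1))⁻¹

/-- The `ℓ¹` distance on `Fin k → ℝ`. -/
def l1dist {k : ℕ} (u v : Fin k → ℝ) : ℝ := ∑ i, |u i - v i|

/-- `F` is an `ε`-open map on `U`, where the target carries the distance `dY`. -/
def IsEpsOpenOn {Y : Type*} (F : X → Y) (dY : Y → Y → ℝ) (U : Set X) (ε : ℝ) : Prop :=
  ∀ x ∈ U, ∃ r > 0, Metric.closedBall x (ε⁻¹ * r) ⊆ U ∧
    IsComplete (Metric.closedBall x (ε⁻¹ * r)) ∧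
    ∀ v : Y, dY (F x) v < r → ∃ y ∈ U, F y = v ∧ ε * dist x y ≤ dY (F x) v

/-- `N` is a norm on a real vector space. -/
def IsNormFn {E : Type*} [AddCommGroup E] [Module ℝ E] (N : E → ℝ) : Prop :=
  (∀ u, 0 ≤ N u) ∧ (∀ u, N u = 0 ↔ u = 0) ∧
  (∀ (a : ℝ) (u : E), N (a • u) = |a| * N u) ∧ ∀ u v, N (u + v) ≤ N u + N v

/-- `F` is an `ε`-isometry between pointed metric spaces, the metrics being
given by the explicit distance functions `dX` and `dY`. -/
def IsEpsIsometry {Y : Type*} (dX : X → X → ℝ) (x : X) (dY : Y → Y → ℝ) (y : Y)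
    (ε : ℝ) (F : X → Y) : Prop :=
  F x = y ∧
  (∀ z z' : X, dX x z < 1 / ε → dX x z' < 1 / ε →
    |dX z z' - dY (F z) (F z')| < ε) ∧
  ∀ r : ℝ, r < 1 / ε → ∀ w : Y, dY y w < r - ε →
    ∃ z : X, dX x z < r ∧ dY w (F z) ≤ ε

/-- The metric space `X` is doubling with constant `N`. -/
def MetricDoubling (X : Type*) [MetricSpace X] (N : ℕ) : Prop :=
  ∀ (x : X) (r : ℝ), 0 < r → ∃ t : Finset X,
    (Metric.ball x r ⊆ ⋃ y ∈ t, Metric.ball y (r / 2)) ∧ t.card ≤ N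

namespace IsNormFn

variable {E : Type*} [AddCommGroup E] [Module ℝ E] {N : E → ℝ}

lemma map_zero (hN : IsNormFn N) : N 0 = 0 := (hN.2.1 0).2 rfl

lemma pos (hN : IsNormFn N) {u : E} (hu : u ≠ 0) : 0 < N u :=
  (hN.1 u).lt_of_ne fun h => hu ((hN.2.1 u).1 h.symm)

lemma smul_of_nonneg (hN : IsNormFn N) {a : ℝ} (ha : 0 ≤ a) (u : E) : N (a • u) = a * N u := by
  rw [hN.2.2.1, abs_of_nonneg ha]

lemma neg (hN : IsNormFn N) (u : E) : N (-u) = N u := by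
  simpa using hN.2.2.1 (-1) u

lemma sub_comm (hN : IsNormFn N) (u v : E) : N (u - v) = N (v - u) := by
  rw [← neg_sub, hN.neg]

lemma sub_le (hN : IsNormFn N) (u v : E) : N (u - v) ≤ N u + N v := by
  simpa [sub_eq_add_neg, hN.neg] using hN.2.2.2 u (-v)

lemma abs_sub_le (hN : IsNormFn N) (u v : E) : |N u - N v| ≤ N (u - v) := by
  rw [abs_sub_le_iff]
  constructor
  · simpa using hN.2.2.2 (u - v) v
  · simpa [hN.sub_comm u v] using hN.2.2.2 (v - u) u

lemma midpoint_sub_left (hN : IsNormFn N) (u v : E) :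
    N ((2⁻¹ : ℝ) • (u + v) - u) = N (u - v) / 2 := by
  rw [show (2⁻¹ : ℝ) • (u + v) - u = (2⁻¹ : ℝ) • (v - u) by module,
    hN.smul_of_nonneg (by norm_num), hN.sub_comm]
  ring

lemma midpoint_sub_right (hN : IsNormFn N) (u v : E) :
    N ((2⁻¹ : ℝ) • (u + v) - v) = N (u - v) / 2 := by
  rw [add_comm, midpoint_sub_left hN, hN.sub_comm]

lemma norm_inv_smul_add_inv_smul (hN : IsNormFn N) {u v : E} (hu : u ≠ 0) (hv : v ≠ 0)
    (h : N (u + v) = N u + N v) : N ((N u)⁻¹ • u + (N v)⁻¹ • v) = 2 := by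
  wlog hle : N v ≤ N u generalizing u v
  · rw [add_comm]
    exact this hv hu (by rw [add_comm, h, add_comm]) (le_of_not_ge hle)
  have hu' := hN.pos hu
  have hv' := hN.pos hv
  have hst : (N u)⁻¹ ≤ (N v)⁻¹ := inv_anti₀ hv' hle
  apply le_antisymm
  · calc N ((N u)⁻¹ • u + (N v)⁻¹ • v) ≤ N ((N u)⁻¹ • u) + N ((N v)⁻¹ • v) := hN.2.2.2 _ _
      _ = 2 := by
        rw [hN.smul_of_nonneg (by positivity), hN.smul_of_nonneg (by positivity),
          inv_mul_cancel₀ hu'.ne', inv_mul_cancel₀ hv'.ne']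
        norm_num
  · have hsplit : (N v)⁻¹ • (u + v)
        = ((N u)⁻¹ • u + (N v)⁻¹ • v) + ((N v)⁻¹ - (N u)⁻¹) • u := by module
    have htri := hN.2.2.2 ((N u)⁻¹ • u + (N v)⁻¹ • v) (((N v)⁻¹ - (N u)⁻¹) • u)
    rw [← hsplit, hN.smul_of_nonneg (by positivity), hN.smul_of_nonneg (by linarith), h] at htri
    have h2 : (N v)⁻¹ * (N u + N v) - ((N v)⁻¹ - (N u)⁻¹) * N u = 2 := by
      field_simp
      ring
    linarith

lemma eq_of_norm_add_eq_two {p C' : ℝ} (hN : IsNormFn N) (hC' : 0 < C')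
    (huc : ∀ u v : E, N ((2⁻¹ : ℝ) • (u + v)) ^ p
      ≤ (1/2) * N u ^ p + (1/2) * N v ^ p - (C'/4) * N (u - v) ^ p)
    {u v : E} (hu : N u = 1) (hv : N v = 1) (huv : N (u + v) = 2) : u = v := by
  have key := huc u v
  rw [hN.smul_of_nonneg (by norm_num), huv, hu, hv] at key
  norm_num at key
  by_contra hne
  have := mul_pos hC' (Real.rpow_pos_of_pos (hN.pos (sub_ne_zero.2 hne)) p)
  linarith

lemma norm_inv_smul_self (hN : IsNormFn N) {u : E} (hu : u ≠ 0) : N ((N u)⁻¹ • u) = 1 := by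
  rw [hN.smul_of_nonneg (inv_nonneg.2 (hN.1 u)), inv_mul_cancel₀ (hN.pos hu).ne']

lemma add_lt_of_not_exists_smul {p C' : ℝ} (hN : IsNormFn N) (hC' : 0 < C')
    (huc : ∀ u v : E, N ((2⁻¹ : ℝ) • (u + v)) ^ p
      ≤ (1/2) * N u ^ p + (1/2) * N v ^ p - (C'/4) * N (u - v) ^ p)
    {u v : E} (huv : ¬ ∃ a : ℝ, 0 ≤ a ∧ u = a • v) (hvu : ¬ ∃ a : ℝ, 0 ≤ a ∧ v = a • u) :
    N (u + v) < N u + N v := by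
  have hu : u ≠ 0 := fun hu => huv ⟨0, le_rfl, by simp [hu]⟩
  have hv : v ≠ 0 := fun hv => hvu ⟨0, le_rfl, by simp [hv]⟩
  refine (hN.2.2.2 u v).lt_of_ne fun h => huv ⟨N u / N v, div_nonneg (hN.1 u) (hN.1 v), ?_⟩
  have hunit := hN.eq_of_norm_add_eq_two hC' huc (hN.norm_inv_smul_self hu)
    (hN.norm_inv_smul_self hv) (hN.norm_inv_smul_add_inv_smul hu hv h)
  calc u = N u • ((N u)⁻¹ • u) := by rw [smul_smul, mul_inv_cancel₀ (hN.pos hu).ne', one_smul]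
    _ = (N u / N v) • v := by rw [hunit, smul_smul, div_eq_mul_inv]

end IsNormFn

lemma tendsto_zero_of_rpow_le {ι : Type*} {l : Filter ι} {g h : ι → ℝ} {L p : ℝ} (hp : 0 < p)
    (hg : ∀ i, 0 ≤ g i) (hh : Tendsto h l (𝓝 L)) (hL : L ≤ 0) (hgh : ∀ᶠ i in l, g i ^ p ≤ h i) :
    Tendsto g l (𝓝 0) := by
  have hmax : Tendsto (fun i => max (h i) 0) l (𝓝 0) := by
    simpa only [max_eq_right hL] using hh.max (tendsto_const_nhds (x := (0 : ℝ)))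
  have hgp : Tendsto (fun i => g i ^ p) l (𝓝 0) :=
    squeeze_zero' (Eventually.of_forall fun i => Real.rpow_nonneg (hg i) p)
      (hgh.mono fun i hi => hi.trans (le_max_left _ _)) hmax
  have hroot := hgp.rpow_const (p := p⁻¹) (Or.inr (inv_nonneg.2 hp.le))
  rw [Real.zero_rpow (inv_ne_zero hp.ne')] at hroot
  refine hroot.congr fun i => ?_
  rw [← Real.rpow_mul (hg i), mul_inv_cancel₀ hp.ne', Real.rpow_one]

lemma rpow_midpoint_div {a b c d K p s : ℝ} (hs : 0 < s) (ha : 0 ≤ a) (hb : 0 ≤ b) (hc : 0 ≤ c)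
    (hd : 0 ≤ d) (h : a ^ p ≤ 1/2 * b ^ p + 1/2 * c ^ p - K * d ^ p) :
    (a / s) ^ p ≤ 1/2 * (b / s) ^ p + 1/2 * (c / s) ^ p - K * (d / s) ^ p := by
  rw [Real.div_rpow ha hs.le, Real.div_rpow hb hs.le, Real.div_rpow hc hs.le,
    Real.div_rpow hd hs.le]
  calc a ^ p / s ^ p ≤ (1/2 * b ^ p + 1/2 * c ^ p - K * d ^ p) / s ^ p := by gcongr
    _ = _ := by ring

lemma IsConstSpeedGeodesic.dist_le {γ : ℝ → X} (hγ : IsConstSpeedGeodesic γ) (y : X) {t : ℝ}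
    (ht : t ∈ Icc (0 : ℝ) 1) : dist y (γ t) ≤ dist y (γ 0) + dist (γ 0) (γ 1) := by
  calc dist y (γ t) ≤ dist y (γ 0) + dist (γ 0) (γ t) := dist_triangle _ _ _
    _ ≤ dist y (γ 0) + dist (γ 0) (γ 1) := by
      rw [hγ 0 ⟨le_rfl, zero_le_one⟩ t ht, zero_sub, abs_neg, abs_of_nonneg ht.1]
      gcongr
      exact mul_le_of_le_one_left dist_nonneg ht.2

def IsPUniformlyConvexOn (p C' : ℝ) (U : Set X) : Prop :=
  ∀ ξ : ℝ → X, IsConstSpeedGeodesic ξ → (∀ t ∈ Icc (0:ℝ) 1, ξ t ∈ U) → ∀ y ∈ U,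
    dist y (ξ (1/2)) ^ p ≤ (1/2) * dist y (ξ 0) ^ p + (1/2) * dist y (ξ 1) ^ p
      - (C'/4) * dist (ξ 0) (ξ 1) ^ p

section BlowUp

variable {E : Type*} [AddCommGroup E] {N : E → ℝ} {x : X} {r ε : ℕ → ℝ}
  {F : ℕ → X → E}

structure IsBlowUpSeq (N : E → ℝ) (x : X) (r ε : ℕ → ℝ) (F : ℕ → X → E) : Prop where
  scale_pos : ∀ k, 0 < r k
  tendsto_scale : Tendsto r atTop (𝓝 0)
  tendsto_eps : Tendsto ε atTop (𝓝[>] 0)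
  isEpsIsometry : ∀ k,
    IsEpsIsometry (fun a b => dist a b / r k) x (fun u v => N (u - v)) 0 (ε k) (F k)

lemma exists_isBlowUpSeq
    (h : ∀ ε : ℝ, 0 < ε → ∃ r₀ > 0, ∀ r : ℝ, 0 < r → r < r₀ → ∃ F : X → E,
      IsEpsIsometry (fun a b => dist a b / r) x (fun u v => N (u - v)) (0 : E) ε F) :
    ∃ r ε F, IsBlowUpSeq N x r ε F := by
  choose r₀ hr₀ hF using h
  set ε : ℕ → ℝ := fun k => 1 / ((k : ℝ) + 1)
  have hε : ∀ k, 0 < ε k := fun k => Nat.one_div_pos_of_nat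
  set r : ℕ → ℝ := fun k => min (r₀ (ε k) (hε k) / 2) (ε k)
  have hr : ∀ k, 0 < r k := fun k => lt_min (half_pos (hr₀ _ _)) (hε k)
  choose F hF using fun k =>
    hF (ε k) (hε k) (r k) (hr k) ((min_le_left _ _).trans_lt (half_lt_self (hr₀ _ _)))
  refine ⟨r, ε, F, hr, ?_, ?_, hF⟩
  · exact squeeze_zero (fun k => (hr k).le) (fun k => min_le_right _ _)
      tendsto_one_div_add_atTop_nhds_zero_nat
  · exact tendsto_nhdsWithin_iff.2
      ⟨tendsto_one_div_add_atTop_nhds_zero_nat, Eventually.of_forall hε⟩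

def IsLiftSeq (N : E → ℝ) (x : X) (r : ℕ → ℝ) (F : ℕ → X → E) (z : ℕ → X) (u : E) : Prop :=
  Tendsto (fun k => N (F k (z k) - u)) atTop (𝓝 0) ∧
    IsBoundedUnder (· ≤ ·) atTop (fun k => dist x (z k) / r k)

namespace IsBlowUpSeq

lemma tendsto_eps_nhds (hB : IsBlowUpSeq N x r ε F) : Tendsto ε atTop (𝓝 0) :=
  hB.tendsto_eps.mono_right nhdsWithin_le_nhds

lemma eventually_lt_inv_eps (hB : IsBlowUpSeq N x r ε F) (B : ℝ) :
    ∀ᶠ k in atTop, B < 1 / ε k := by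
  filter_upwards [(tendsto_inv_nhdsGT_zero.comp hB.tendsto_eps).eventually
    (eventually_gt_atTop B)] with k hk
  simpa using hk

lemma eventually_abs_dist_div_sub_lt (hB : IsBlowUpSeq N x r ε F) {z w : ℕ → X}
    (hz : IsBoundedUnder (· ≤ ·) atTop (fun k => dist x (z k) / r k))
    (hw : IsBoundedUnder (· ≤ ·) atTop (fun k => dist x (w k) / r k)) :
    ∀ᶠ k in atTop, |dist (z k) (w k) / r k - N (F k (z k) - F k (w k))| < ε k := by
  obtain ⟨Bz, hBz⟩ := hz.eventually_le
  obtain ⟨Bw, hBw⟩ := hw.eventually_le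
  filter_upwards [hBz, hBw, hB.eventually_lt_inv_eps (max Bz Bw)] with k hzk hwk hk
  exact (hB.isEpsIsometry k).2.1 (z k) (w k) (hzk.trans_lt ((le_max_left _ _).trans_lt hk))
    (hwk.trans_lt ((le_max_right _ _).trans_lt hk))

variable [Module ℝ E]

lemma isLiftSeq_self (hN : IsNormFn N) (hB : IsBlowUpSeq N x r ε F) :
    IsLiftSeq N x r F (fun _ => x) 0 := by
  refine ⟨?_, isBoundedUnder_of_eventually_le (a := 0) (Eventually.of_forall fun k => ?_)⟩
  · simp only [(hB.isEpsIsometry _).1, sub_zero, hN.map_zero, tendsto_const_nhds]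
  · simp

lemma exists_isLiftSeq (hN : IsNormFn N) (hB : IsBlowUpSeq N x r ε F) (u : E) :
    ∃ z, IsLiftSeq N x r F z u := by
  have hev : ∀ᶠ k in atTop, N u + 1 < 1 / ε k ∧ ε k < 1 :=
    (hB.eventually_lt_inv_eps _).and (hB.tendsto_eps_nhds.eventually (gt_mem_nhds one_pos))
  have hlift : ∀ k, ∃ z, (N u + 1 < 1 / ε k ∧ ε k < 1) →
      dist x z / r k < N u + 1 ∧ N (u - F k z) ≤ ε k := by
    intro k
    by_cases hk : N u + 1 < 1 / ε k ∧ ε k < 1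
    · obtain ⟨z, hz⟩ := (hB.isEpsIsometry k).2.2 (N u + 1) hk.1 u
        (by show N (0 - u) < _; rw [zero_sub, hN.neg]; linarith [hk.2])
      exact ⟨z, fun _ => hz⟩
    · exact ⟨x, fun h => absurd h hk⟩
  choose z hz using hlift
  refine ⟨z, ?_, isBoundedUnder_of_eventually_le (hev.mono fun k hk => (hz k hk).1.le)⟩
  refine squeeze_zero' (Eventually.of_forall fun k => hN.1 _) ?_ hB.tendsto_eps_nhds
  exact hev.mono fun k hk => by rw [hN.sub_comm]; exact (hz k hk).2

lemma tendsto_dist_div (hN : IsNormFn N) (hB : IsBlowUpSeq N x r ε F) {z w : ℕ → X} {u v : E}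
    (hz : IsLiftSeq N x r F z u) (hw : IsLiftSeq N x r F w v) :
    Tendsto (fun k => dist (z k) (w k) / r k) atTop (𝓝 (N (u - v))) := by
  have himage : Tendsto (fun k => N (F k (z k) - F k (w k))) atTop (𝓝 (N (u - v))) := by
    rw [tendsto_iff_norm_sub_tendsto_zero]
    refine squeeze_zero (fun _ => norm_nonneg _) (fun k => ?_) (by simpa using hz.1.add hw.1)
    calc ‖N (F k (z k) - F k (w k)) - N (u - v)‖
        ≤ N ((F k (z k) - u) - (F k (w k) - v)) := by
          rw [Real.norm_eq_abs, show (F k (z k) - u) - (F k (w k) - v)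
            = (F k (z k) - F k (w k)) - (u - v) by abel]
          exact hN.abs_sub_le _ _
      _ ≤ N (F k (z k) - u) + N (F k (w k) - v) := hN.sub_le _ _
  have herr : Tendsto (fun k => dist (z k) (w k) / r k - N (F k (z k) - F k (w k)))
      atTop (𝓝 0) :=
    squeeze_zero_norm' ((hB.eventually_abs_dist_div_sub_lt hz.2 hw.2).mono fun k hk => hk.le)
      hB.tendsto_eps_nhds
  simpa using herr.add himage

lemma tendsto_dist_self_div (hN : IsNormFn N) (hB : IsBlowUpSeq N x r ε F) {z : ℕ → X} {u : E}
    (hz : IsLiftSeq N x r F z u) : Tendsto (fun k => dist x (z k) / r k) atTop (𝓝 (N u)) := by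
  simpa [hN.neg] using hB.tendsto_dist_div hN (hB.isLiftSeq_self hN) hz

lemma tendsto_dist (hN : IsNormFn N) (hB : IsBlowUpSeq N x r ε F) {z w : ℕ → X} {u v : E}
    (hz : IsLiftSeq N x r F z u) (hw : IsLiftSeq N x r F w v) :
    Tendsto (fun k => dist (z k) (w k)) atTop (𝓝 0) := by
  have h := hB.tendsto_scale.mul (hB.tendsto_dist_div hN hz hw)
  rw [zero_mul] at h
  exact h.congr fun k => mul_div_cancel₀ _ (hB.scale_pos k).ne'

variable {zu zv zw : ℕ → X} {u v : E} {γ : ℕ → ℝ → X} {ρ : ℝ}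

lemma eventually_mem_ball (hN : IsNormFn N) (hB : IsBlowUpSeq N x r ε F)
    (hzu : IsLiftSeq N x r F zu u) (hρ : 0 < ρ) : ∀ᶠ k in atTop, zu k ∈ ball x ρ :=
  (hB.tendsto_dist hN (hB.isLiftSeq_self hN) hzu).eventually (gt_mem_nhds hρ) |>.mono
    fun _ hk => mem_ball'.2 hk

lemma eventually_geodesic_mem_ball (hN : IsNormFn N) (hB : IsBlowUpSeq N x r ε F)
    (hzu : IsLiftSeq N x r F zu u) (hzv : IsLiftSeq N x r F zv v)
    (hγ : ∀ k, IsConstSpeedGeodesic (γ k)) (hγ0 : ∀ k, γ k 0 = zu k) (hγ1 : ∀ k, γ k 1 = zv k)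
    (hρ : 0 < ρ) : ∀ᶠ k in atTop, ∀ t ∈ Icc (0:ℝ) 1, γ k t ∈ ball x ρ := by
  have h := (hB.tendsto_dist hN (hB.isLiftSeq_self hN) hzu).add (hB.tendsto_dist hN hzu hzv)
  rw [zero_add] at h
  filter_upwards [h.eventually (gt_mem_nhds hρ)] with k hk t ht
  rw [mem_ball']
  refine ((hγ k).dist_le x ht).trans_lt ?_
  rwa [hγ0, hγ1]

lemma tendsto_dist_geodesic_midpoint_div (hN : IsNormFn N) (hB : IsBlowUpSeq N x r ε F)
    {p C' : ℝ} (hp : 0 < p) (hC' : (2 : ℝ) ^ (-p) ≤ C' / 4) (hρ : 0 < ρ)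
    (hconv : IsPUniformlyConvexOn p C' (ball x ρ))
    (hzu : IsLiftSeq N x r F zu u) (hzv : IsLiftSeq N x r F zv v)
    (hzw : IsLiftSeq N x r F zw ((2⁻¹ : ℝ) • (u + v)))
    (hγ : ∀ k, IsConstSpeedGeodesic (γ k)) (hγ0 : ∀ k, γ k 0 = zu k) (hγ1 : ∀ k, γ k 1 = zv k) :
    Tendsto (fun k => dist x (γ k (1/2)) / r k) atTop (𝓝 (N ((2⁻¹ : ℝ) • (u + v)))) := by
  have hbound : (1/2) * (N (u - v) / 2) ^ p + (1/2) * (N (u - v) / 2) ^ p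
      - C' / 4 * N (u - v) ^ p ≤ 0 := by
    have h2p := mul_le_mul_of_nonneg_left hC' (Real.rpow_nonneg (hN.1 (u - v)) p)
    rw [Real.rpow_neg zero_le_two, ← div_eq_mul_inv] at h2p
    rw [Real.div_rpow (hN.1 _) zero_le_two]
    linarith
  have hclose : Tendsto (fun k => dist (zw k) (γ k (1/2)) / r k) atTop (𝓝 0) := by
    refine tendsto_zero_of_rpow_le hp (fun k => div_nonneg dist_nonneg (hB.scale_pos k).le)
      (((((hB.tendsto_dist_div hN hzw hzu).rpow_const (Or.inr hp.le)).const_mul (1/2)).add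
        (((hB.tendsto_dist_div hN hzw hzv).rpow_const (Or.inr hp.le)).const_mul (1/2))).sub
        (((hB.tendsto_dist_div hN hzu hzv).rpow_const (Or.inr hp.le)).const_mul (C'/4)))
      (by rwa [hN.midpoint_sub_left, hN.midpoint_sub_right]) ?_
    filter_upwards [hB.eventually_geodesic_mem_ball hN hzu hzv hγ hγ0 hγ1 hρ,
      hB.eventually_mem_ball hN hzw hρ] with k hk hwk
    have h := hconv (γ k) (hγ k) hk (zw k) hwk
    rw [hγ0, hγ1] at h
    exact rpow_midpoint_div (hB.scale_pos k) dist_nonneg dist_nonneg dist_nonneg dist_nonneg h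
  have hdiff : Tendsto (fun k => dist x (γ k (1/2)) / r k - dist x (zw k) / r k)
      atTop (𝓝 0) := by
    refine squeeze_zero_norm (fun k => ?_) hclose
    rw [← sub_div, Real.norm_eq_abs, abs_div, abs_of_pos (hB.scale_pos k), dist_comm (zw k)]
    exact div_le_div_of_nonneg_right (dist_dist_dist_le_right x _ _) (hB.scale_pos k).le
  simpa using hdiff.add (hB.tendsto_dist_self_div hN hzw)

theorem midpoint_inequalities (hN : IsNormFn N) (hB : IsBlowUpSeq N x r ε F)
    (hgeo : IsGeodesicSpace X) {S p C' : ℝ} (hconc : SConcave X S) (hp : 0 < p)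
    (hC' : (2 : ℝ) ^ (-p) ≤ C' / 4) (hρ : 0 < ρ) (hconv : IsPUniformlyConvexOn p C' (ball x ρ))
    (u v : E) :
    ((1/2) * N u ^ 2 + (1/2) * N v ^ 2 - (S/4) * N (u - v) ^ 2
        ≤ N ((2⁻¹ : ℝ) • (u + v)) ^ 2) ∧
      (N ((2⁻¹ : ℝ) • (u + v)) ^ p
        ≤ (1/2) * N u ^ p + (1/2) * N v ^ p - (C'/4) * N (u - v) ^ p) := by
  obtain ⟨zu, hzu⟩ := hB.exists_isLiftSeq hN u
  obtain ⟨zv, hzv⟩ := hB.exists_isLiftSeq hN v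
  obtain ⟨zw, hzw⟩ := hB.exists_isLiftSeq hN ((2⁻¹ : ℝ) • (u + v))
  choose γ hγ hγ0 hγ1 using fun k => hgeo (zu k) (zv k)
  have hm := hB.tendsto_dist_geodesic_midpoint_div hN hp hC' hρ hconv hzu hzv hzw hγ hγ0 hγ1
  have hu := hB.tendsto_dist_self_div hN hzu
  have hv := hB.tendsto_dist_self_div hN hzv
  have huv := hB.tendsto_dist_div hN hzu hzv
  constructor
  · refine le_of_tendsto_of_tendsto ((((hu.pow 2).const_mul _).add ((hv.pow 2).const_mul _)).sub
      ((huv.pow 2).const_mul _)) (hm.pow 2) (Eventually.of_forall fun k => ?_)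
    have h := hconc x (γ k) (hγ k) (1/2) ⟨by norm_num, by norm_num⟩
    rw [hγ0, hγ1] at h
    have hr := hB.scale_pos k
    calc (1/2) * (dist x (zu k) / r k) ^ 2 + (1/2) * (dist x (zv k) / r k) ^ 2
          - (S/4) * (dist (zu k) (zv k) / r k) ^ 2
        = ((1 - 1/2) * dist x (zu k) ^ 2 + 1/2 * dist x (zv k) ^ 2
          - S * (1/2) * (1 - 1/2) * dist (zu k) (zv k) ^ 2) / r k ^ 2 := by ring
      _ ≤ dist x (γ k (1/2)) ^ 2 / r k ^ 2 := by gcongr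
      _ = (dist x (γ k (1/2)) / r k) ^ 2 := (div_pow _ _ _).symm
  · refine le_of_tendsto_of_tendsto (hm.rpow_const (Or.inr hp.le))
      (((((hu.rpow_const (Or.inr hp.le)).const_mul _).add
        ((hv.rpow_const (Or.inr hp.le)).const_mul _)).sub
        ((huv.rpow_const (Or.inr hp.le)).const_mul _))) ?_
    filter_upwards [hB.eventually_geodesic_mem_ball hN hzu hzv hγ hγ0 hγ1 hρ] with k hk
    have h := hconv (γ k) (hγ k) hk x (mem_ball_self hρ)
    rw [hγ0, hγ1] at h
    exact rpow_midpoint_div (hB.scale_pos k) dist_nonneg dist_nonneg dist_nonneg dist_nonneg h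

end IsBlowUpSeq

end BlowUp

theorem stmt_3_general {X : Type*} [MetricSpace X]
    [MeasurableSpace X] [BorelSpace X]
    (S : ℝ) (hS : 1 ≤ S)
    (hgeo : IsGeodesicSpace X) (hconc : SConcave X S)
    (n : ℕ)
    (p C' : ℝ) (hp : S + 1 < p) (hC' : (2 : ℝ) ^ (2 - p) ≤ C')
    (hconv : ∀ x : X, ∃ r > 0, ∀ ξ : ℝ → X, IsConstSpeedGeodesic ξ →
      (∀ t ∈ Set.Icc (0:ℝ) 1, ξ t ∈ Metric.ball x r) →
      ∀ y ∈ Metric.ball x r,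
        dist y (ξ (1/2)) ^ p ≤ (1/2) * dist y (ξ 0) ^ p + (1/2) * dist y (ξ 1) ^ p
          - (C'/4) * dist (ξ 0) (ξ 1) ^ p) :
    ∀ᵐ x ∂(μH[(n : ℝ)] : Measure X),
      ∀ N : (Fin n → ℝ) → ℝ, IsNormFn N →
        (∀ ε : ℝ, 0 < ε → ∃ r₀ > 0, ∀ r : ℝ, 0 < r → r < r₀ →
          ∃ F : X → Fin n → ℝ,
            IsEpsIsometry (fun a b => dist a b / r) x
              (fun u v => N (u - v)) (0 : Fin n → ℝ) ε F) →
        (∀ u v : Fin n → ℝ, (¬ ∃ a : ℝ, 0 ≤ a ∧ u = a • v) →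
            (¬ ∃ a : ℝ, 0 ≤ a ∧ v = a • u) → N (u + v) < N u + N v) ∧
        (∀ u v : Fin n → ℝ,
          (1/2) * N u ^ 2 + (1/2) * N v ^ 2 - (S/4) * N (u - v) ^ 2
            ≤ N ((u + v) / 2) ^ 2) ∧
        (∀ u v : Fin n → ℝ,
          N ((u + v) / 2) ^ p
            ≤ (1/2) * N u ^ p + (1/2) * N v ^ p - (C'/4) * N (u - v) ^ p) := by
  refine ae_of_all _ fun x N hN hblowup => ?_
  have hp0 : 0 < p := by linarith
  have hC'4 : (2 : ℝ) ^ (-p) ≤ C' / 4 := by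
    rw [show 2 - p = 2 + -p by ring, Real.rpow_add two_pos, Real.rpow_two] at hC'
    linarith
  obtain ⟨r, ε, F, hB⟩ := exists_isBlowUpSeq hblowup
  obtain ⟨ρ, hρ, hρconv⟩ := hconv x
  have hmid := hB.midpoint_inequalities hN hgeo hconc hp0 hC'4 hρ hρconv
  have hhalf : ∀ w : Fin n → ℝ, w / 2 = (2⁻¹ : ℝ) • w := fun w => by
    ext
    simp [div_eq_inv_mul]
  simp only [hhalf]
  have hC'pos : 0 < C' := by linarith [Real.rpow_pos_of_pos two_pos (-p)]
  exact ⟨fun u v => hN.add_lt_of_not_exists_smul hC'pos (fun u v => (hmid u v).2),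
    fun u v => (hmid u v).1, fun u v => (hmid u v).2⟩

/-- under local `p`-uniform convexity, the Banach blow-up limits are
strictly convex, `2`-uniformly smooth and `p`-uniformly convex. -/
theorem stmt_3 {X : Type*} [MetricSpace X] [CompleteSpace X]
    [MeasurableSpace X] [BorelSpace X]
    (S C D : ℝ) (hS : 1 ≤ S) (hC : 0 ≤ C) (hD : 0 < D)
    (hgeo : IsGeodesicSpace X) (hconc : SConcave X S)
    (hsemi : LocSemiConvex X C D) (hbus : BusemannConcave X)
    (n : ℕ) (hdim : dimH (Set.univ : Set X) = n)
    (p C' : ℝ) (hp : S + 1 < p) (hC' : (2 : ℝ) ^ (2 - p) ≤ C')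
    (hconv : ∀ x : X, ∃ r > 0, ∀ ξ : ℝ → X, IsConstSpeedGeodesic ξ →
      (∀ t ∈ Set.Icc (0:ℝ) 1, ξ t ∈ Metric.ball x r) →
      ∀ y ∈ Metric.ball x r,
        dist y (ξ (1/2)) ^ p ≤ (1/2) * dist y (ξ 0) ^ p + (1/2) * dist y (ξ 1) ^ p
          - (C'/4) * dist (ξ 0) (ξ 1) ^ p) :
    ∀ᵐ x ∂(μH[(n : ℝ)] : Measure X),
      ∀ N : (Fin n → ℝ) → ℝ, IsNormFn N →
        (∀ ε : ℝ, 0 < ε → ∃ r₀ > 0, ∀ r : ℝ, 0 < r → r < r₀ →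
          ∃ F : X → Fin n → ℝ,
            IsEpsIsometry (fun a b => dist a b / r) x
              (fun u v => N (u - v)) (0 : Fin n → ℝ) ε F) →
        (∀ u v : Fin n → ℝ, (¬ ∃ a : ℝ, 0 ≤ a ∧ u = a • v) →
            (¬ ∃ a : ℝ, 0 ≤ a ∧ v = a • u) → N (u + v) < N u + N v) ∧
        (∀ u v : Fin n → ℝ,
          (1/2) * N u ^ 2 + (1/2) * N v ^ 2 - (S/4) * N (u - v) ^ 2
            ≤ N ((u + v) / 2) ^ 2) ∧
        (∀ u v : Fin n → ℝ,
          N ((u + v) / 2) ^ p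
            ≤ (1/2) * N u ^ p + (1/2) * N v ^ p - (C'/4) * N (u - v) ^ p) :=
  stmt_3_general S hS hgeo hconc n p C' hp hC' hconv
end
end

section
/- Let X be an S-concave complete geodesic space with S ≥ 1, let p, x ∈ X with p ≠ x, and let ξ : [0,l] → X with l > 0 be a unit-speed geodesic with ξ 0 = x. Then the limit ∠pxξ := lim_{t→0⁺} ∠̃(p, x, ξ t) exists, and for every t ∈ (0, l] with (S−1)·t ≤ 2·dist(p,x) one has ∠̃(p, x, ξ t) ≤ ∠pxξ + arccos(1 − (S−1)·t/(2·dist(p,x))). -/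
open Set Metric MeasureTheory Filter Topology

noncomputable section

variable {X : Type*} [MetricSpace X]

private lemma algebra_mono {S d τ t gτ gt : ℝ} (hd : 0 < d) (hτ : 0 < τ) (hτt : τ ≤ t)
    (hc : (t - τ) * d ^ 2 + τ * gt ^ 2 - S * τ * (t - τ) * t ≤ t * gτ ^ 2) :
    (d ^ 2 + τ ^ 2 - gτ ^ 2) / (2 * d * τ) + (S - 1) * τ / (2 * d)
      ≤ (d ^ 2 + t ^ 2 - gt ^ 2) / (2 * d * t) + (S - 1) * t / (2 * d) := by
  have ht : 0 < t := lt_of_lt_of_le hτ hτt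
  have e1 : (d ^ 2 + τ ^ 2 - gτ ^ 2) / (2 * d * τ) + (S - 1) * τ / (2 * d)
      = (d ^ 2 + τ ^ 2 - gτ ^ 2 + (S - 1) * τ ^ 2) / (2 * d * τ) := by
    field_simp
  have e2 : (d ^ 2 + t ^ 2 - gt ^ 2) / (2 * d * t) + (S - 1) * t / (2 * d)
      = (d ^ 2 + t ^ 2 - gt ^ 2 + (S - 1) * t ^ 2) / (2 * d * t) := by
    field_simp
  rw [e1, e2, div_le_div_iff₀ (by positivity) (by positivity)]
  nlinarith [mul_le_mul_of_nonneg_left hc (by positivity : (0:ℝ) ≤ 2 * d)]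

private lemma f_bounds {d t gt : ℝ} (hd : 0 < d) (ht : 0 < t)
    (h1 : d ≤ gt + t) (h2 : t ≤ gt + d) (h3 : gt ≤ d + t) (h0 : 0 ≤ gt) :
    -1 ≤ (d ^ 2 + t ^ 2 - gt ^ 2) / (2 * d * t)
      ∧ (d ^ 2 + t ^ 2 - gt ^ 2) / (2 * d * t) ≤ 1 := by
  constructor
  · rw [le_div_iff₀ (by positivity)]
    nlinarith
  · rw [div_le_one (by positivity)]
    nlinarith [mul_nonneg (by linarith : (0:ℝ) ≤ gt + t - d) (by linarith : (0:ℝ) ≤ gt + d - t)]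

private lemma trig_aux {f c ε : ℝ} (hc1 : -1 ≤ c) (hc2 : c ≤ 1)
    (hε0 : 0 ≤ ε) (hε1 : ε ≤ 1) (h : c - ε ≤ f) :
    Real.arccos f ≤ Real.arccos c + Real.arccos (1 - ε) := by
  set A := Real.arccos c with hA
  set B := Real.arccos (1 - ε) with hB
  by_cases hπ : A + B ≤ Real.pi
  · have hA0 : 0 ≤ A := Real.arccos_nonneg c
    have hB0 : 0 ≤ B := Real.arccos_nonneg _
    have hAπ : A ≤ Real.pi := Real.arccos_le_pi c
    have hBπ : B ≤ Real.pi := Real.arccos_le_pi _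
    have hcosA : Real.cos A = c := Real.cos_arccos hc1 hc2
    have hcosB : Real.cos B = 1 - ε := Real.cos_arccos (by linarith) (by linarith)
    have hsa : 0 ≤ Real.sin (A / 2) :=
      Real.sin_nonneg_of_nonneg_of_le_pi (by linarith) (by linarith [Real.pi_pos])
    have hsb : 0 ≤ Real.sin (B / 2) :=
      Real.sin_nonneg_of_nonneg_of_le_pi (by linarith) (by linarith [Real.pi_pos])
    have hcab : 0 ≤ Real.cos (A / 2 + B / 2) :=
      Real.cos_nonneg_of_mem_Icc ⟨by linarith [Real.pi_pos], by linarith⟩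
    rw [Real.cos_add] at hcab
    have hsinA : Real.sin A = 2 * Real.sin (A / 2) * Real.cos (A / 2) := by
      have := Real.sin_two_mul (A / 2)
      rw [show 2 * (A / 2) = A by ring] at this
      exact this
    have hsinB : Real.sin B = 2 * Real.sin (B / 2) * Real.cos (B / 2) := by
      have := Real.sin_two_mul (B / 2)
      rw [show 2 * (B / 2) = B by ring] at this
      exact this
    have hcosA2 : Real.cos A = 2 * Real.cos (A / 2) ^ 2 - 1 := by
      have := Real.cos_two_mul (A / 2)
      rw [show 2 * (A / 2) = A by ring] at this
      exact this
    have hcosB2 : Real.cos B = 2 * Real.cos (B / 2) ^ 2 - 1 := by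
      have := Real.cos_two_mul (B / 2)
      rw [show 2 * (B / 2) = B by ring] at this
      exact this
    have hpyA : Real.sin (A / 2) ^ 2 + Real.cos (A / 2) ^ 2 = 1 := Real.sin_sq_add_cos_sq _
    have hpyB : Real.sin (B / 2) ^ 2 + Real.cos (B / 2) ^ 2 = 1 := Real.sin_sq_add_cos_sq _
    have hεe : ε = 2 * Real.sin (B / 2) ^ 2 := by linarith
    have hce : 1 - c = 2 * Real.sin (A / 2) ^ 2 := by linarith
    have key : ε * (1 - c) ≤ Real.sin A * Real.sin B := by
      calc ε * (1 - c) = 4 * (Real.sin (A / 2) * Real.sin (B / 2)) ^ 2 := by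
            rw [hεe, hce]; ring
        _ ≤ 4 * (Real.sin (A / 2) * Real.sin (B / 2) * (Real.cos (A / 2) * Real.cos (B / 2))) := by
            nlinarith [mul_nonneg (mul_nonneg hsa hsb) hcab]
        _ = Real.sin A * Real.sin B := by rw [hsinA, hsinB]; ring
    have hfin : Real.cos (A + B) ≤ f := by
      rw [Real.cos_add, hcosA, hcosB]
      nlinarith [key]
    have h5 : Real.arccos f ≤ Real.arccos (Real.cos (A + B)) :=
      sub_le_sub_left (Real.monotone_arcsin hfin) _
    rwa [Real.arccos_cos (by linarith) hπ] at h5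
  · push_neg at hπ
    linarith [Real.arccos_le_pi f]

/-- the angle `∠pxξ` viewed from `p` is well defined and satisfies
the almost comparison inequality. -/
theorem stmt_9 {X : Type*} [MetricSpace X] [CompleteSpace X]
    (S : ℝ) (hS : 1 ≤ S) (hgeo : IsGeodesicSpace X) (hconc : SConcave X S)
    (p x : X) (hpx : p ≠ x) (l : ℝ) (hl : 0 < l)
    (ξ : ℝ → X) (hξ : IsUnitSpeedGeodesicOn ξ 0 l) (hξ0 : ξ 0 = x) :
    ∃ A : ℝ,
      Filter.Tendsto (fun t => compAngle p x (ξ t)) (𝓝[>] (0 : ℝ)) (𝓝 A) ∧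
      ∀ t ∈ Set.Ioc (0 : ℝ) l, (S - 1) * t ≤ 2 * dist p x →
        compAngle p x (ξ t) ≤ A + Real.arccos (1 - (S - 1) * t / (2 * dist p x))  := by
  have hd : 0 < dist p x := dist_pos.mpr hpx
  set d := dist p x with hdd
  have hxt : ∀ t ∈ Set.Icc (0:ℝ) l, dist x (ξ t) = t := by
    intro t ht
    have h := hξ 0 ⟨le_refl 0, hl.le⟩ t ht
    rw [hξ0] at h
    rw [h, abs_of_nonpos (by linarith [ht.1])]
    ring
  set f : ℝ → ℝ := fun u => (d ^ 2 + u ^ 2 - dist p (ξ u) ^ 2) / (2 * d * u) with hfdef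
  set F : ℝ → ℝ := fun u => f u + (S - 1) * u / (2 * d) with hFdef
  have hcomp : ∀ t ∈ Set.Ioc (0:ℝ) l, compAngle p x (ξ t) = Real.arccos (f t) := by
    intro t ht
    unfold compAngle
    rw [dist_comm x p, hxt t ⟨ht.1.le, ht.2⟩, ← hdd]
  have hfb : ∀ t ∈ Set.Ioc (0:ℝ) l, -1 ≤ f t ∧ f t ≤ 1 := by
    intro t ht
    have hxtt : dist x (ξ t) = t := hxt t ⟨ht.1.le, ht.2⟩
    have h1 : d ≤ dist p (ξ t) + t := by
      calc d = dist p x := hdd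
        _ ≤ dist p (ξ t) + dist (ξ t) x := dist_triangle _ _ _
        _ = dist p (ξ t) + t := by rw [dist_comm (ξ t) x, hxtt]
    have h2 : t ≤ dist p (ξ t) + d := by
      calc t = dist x (ξ t) := hxtt.symm
        _ ≤ dist x p + dist p (ξ t) := dist_triangle _ _ _
        _ = dist p (ξ t) + d := by rw [dist_comm x p, ← hdd]; ring
    have h3 : dist p (ξ t) ≤ d + t := by
      calc dist p (ξ t) ≤ dist p x + dist x (ξ t) := dist_triangle _ _ _
        _ = d + t := by rw [← hdd, hxtt]
    simpa only [hfdef] using f_bounds hd ht.1 h1 h2 h3 dist_nonneg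
  have K : ∀ τ ∈ Set.Ioc (0:ℝ) l, ∀ t ∈ Set.Ioc (0:ℝ) l, τ ≤ t → F τ ≤ F t := by
    intro τ hτ t ht hτt
    have ht0 : 0 < t := ht.1
    have hmul : ∀ w ∈ Set.Icc (0:ℝ) 1, w * t ∈ Set.Icc (0:ℝ) l := by
      intro w hw
      constructor
      · exact mul_nonneg hw.1 ht0.le
      · calc w * t ≤ 1 * t := mul_le_mul_of_nonneg_right hw.2 ht0.le
          _ = t := one_mul t
          _ ≤ l := ht.2
    have hγ : IsConstSpeedGeodesic (fun u => ξ (u * t)) := by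
      intro u hu v hv
      dsimp only
      rw [hξ _ (hmul u hu) _ (hmul v hv), zero_mul, one_mul, hξ0,
        hxt t ⟨ht0.le, ht.2⟩, show u * t - v * t = (u - v) * t by ring, abs_mul,
        abs_of_nonneg ht0.le]
    have hs : τ / t ∈ Set.Icc (0:ℝ) 1 :=
      ⟨div_nonneg hτ.1.le ht0.le, by rw [div_le_one ht0]; exact hτt⟩
    have hkey := hconc p _ hγ (τ / t) hs
    simp only [zero_mul, one_mul, hξ0] at hkey
    rw [div_mul_cancel₀ τ (ne_of_gt ht0), hxt t ⟨ht0.le, ht.2⟩, ← hdd] at hkey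
    have hc' : (t - τ) * d ^ 2 + τ * dist p (ξ t) ^ 2 - S * τ * (t - τ) * t
        ≤ t * dist p (ξ τ) ^ 2 := by
      have h2 := mul_le_mul_of_nonneg_left hkey ht0.le
      have e : t * ((1 - τ / t) * d ^ 2 + τ / t * dist p (ξ t) ^ 2
          - S * (τ / t) * (1 - τ / t) * t ^ 2)
          = (t - τ) * d ^ 2 + τ * dist p (ξ t) ^ 2 - S * τ * (t - τ) * t := by
        field_simp
      rw [e] at h2
      exact h2
    simp only [hFdef, hfdef]
    exact algebra_mono hd hτ.1 hτt hc'
  have hne : (F '' Set.Ioc (0:ℝ) l).Nonempty := ⟨F l, ⟨l, ⟨hl, le_refl l⟩, rfl⟩⟩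
  have hbdd : BddBelow (F '' Set.Ioc (0:ℝ) l) := by
    refine ⟨-1, ?_⟩
    rintro y ⟨t, ht, rfl⟩
    have h1 := (hfb t ht).1
    have h2 : 0 ≤ (S - 1) * t / (2 * d) :=
      div_nonneg (mul_nonneg (by linarith) ht.1.le) (by positivity)
    simp only [hFdef]
    linarith
  set L := sInf (F '' Set.Ioc (0:ℝ) l) with hL
  have hLle : ∀ t ∈ Set.Ioc (0:ℝ) l, L ≤ F t := fun t ht => csInf_le hbdd ⟨t, ht, rfl⟩
  have hTendF : Filter.Tendsto F (𝓝[>] (0:ℝ)) (𝓝 L) := by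
    rw [Metric.tendsto_nhdsWithin_nhds]
    intro ε hε
    obtain ⟨y, hymem, hy⟩ := exists_lt_of_csInf_lt hne (lt_add_of_pos_right L hε)
    obtain ⟨t0, ht0, rfl⟩ := hymem
    refine ⟨t0, ht0.1, ?_⟩
    intro t ht hdist
    rw [Real.dist_eq, sub_zero, abs_of_pos ht] at hdist
    have htl : t ∈ Set.Ioc (0:ℝ) l := ⟨ht, le_trans hdist.le ht0.2⟩
    have h1 := hLle t htl
    have h2 := K t htl t0 ht0 hdist.le
    rw [Real.dist_eq, abs_of_nonneg (by linarith)]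
    linarith
  have hT2 : Filter.Tendsto (fun t : ℝ => (S - 1) * t / (2 * d)) (𝓝[>] (0:ℝ)) (𝓝 0) := by
    apply tendsto_nhdsWithin_of_tendsto_nhds
    have hc : Continuous (fun t : ℝ => (S - 1) * t / (2 * d)) := by
      apply Continuous.div_const
      exact continuous_const.mul continuous_id
    simpa using hc.tendsto 0
  have hTf : Filter.Tendsto f (𝓝[>] (0:ℝ)) (𝓝 L) := by
    have h := hTendF.sub hT2
    rw [sub_zero] at h
    refine h.congr fun t => ?_
    simp only [hFdef]
    ring
  have hev : ∀ᶠ t in 𝓝[>] (0:ℝ), t ∈ Set.Ioc (0:ℝ) l :=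
    Ioc_mem_nhdsGT_of_mem ⟨le_refl 0, hl⟩
  have hL1 : L ≤ 1 := le_of_tendsto hTf (hev.mono fun t ht => (hfb t ht).2)
  have hLm1 : -1 ≤ L := ge_of_tendsto hTf (hev.mono fun t ht => (hfb t ht).1)
  refine ⟨Real.arccos L, ?_, ?_⟩
  · have h := (Real.continuous_arccos.tendsto L).comp hTf
    refine h.congr' ?_
    filter_upwards [hev] with t ht
    exact (hcomp t ht).symm
  · intro t ht hSt
    rw [hcomp t ht]
    have hε0 : 0 ≤ (S - 1) * t / (2 * d) :=
      div_nonneg (mul_nonneg (by linarith) ht.1.le) (by positivity)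
    have hε1 : (S - 1) * t / (2 * d) ≤ 1 := by
      rw [div_le_one (by positivity)]
      exact hSt
    have hLF := hLle t ht
    have hcε : L - (S - 1) * t / (2 * d) ≤ f t := by
      simp only [hFdef] at hLF
      linarith
    exact trig_aux hLm1 hL1 hε0 hε1 hcε
end
end

section
/- Let X be an S-concave complete geodesic space with S ≥ 1, let p, x ∈ X with p ≠ x, and let ξ : [0,l] → X with l > 0 be a unit-speed geodesic with ξ 0 = x. Then the function t ↦ dist(p, ξ t) is differentiable from the right at t = 0 with lim_{t→0⁺} (dist(p, ξ t) − dist(p, x))/t = −cos(∠pxξ), where ∠pxξ := lim_{t→0⁺} ∠̃(p, x, ξ t). -/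
open Set Metric MeasureTheory Filter Topology

noncomputable section

variable {X : Type*} [MetricSpace X]

/-- first variation: the distance from `p` along a unit-speed
geodesic is differentiable from the right at `0`, with derivative `-cos ∠pxξ`. -/
theorem stmt_10 {X : Type*} [MetricSpace X] [CompleteSpace X]
    (S : ℝ) (hS : 1 ≤ S) (hgeo : IsGeodesicSpace X) (hconc : SConcave X S)
    (p x : X) (hpx : p ≠ x) (l : ℝ) (hl : 0 < l)
    (ξ : ℝ → X) (hξ : IsUnitSpeedGeodesicOn ξ 0 l) (hξ0 : ξ 0 = x) :
    ∃ A : ℝ,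
      Filter.Tendsto (fun t => compAngle p x (ξ t)) (𝓝[>] (0 : ℝ)) (𝓝 A) ∧
      Filter.Tendsto (fun t => (dist p (ξ t) - dist p x) / t) (𝓝[>] (0 : ℝ))
        (𝓝 (-Real.cos A)) := by
  have ha : (0:ℝ) < dist p x := dist_pos.2 hpx
  set a := dist p x with ha_def
  have hdx : ∀ t ∈ Set.Icc (0:ℝ) l, dist (ξ t) x = t := by
    intro t ht
    have h := hξ t ht 0 ⟨le_refl 0, hl.le⟩
    rw [hξ0] at h
    rw [h, sub_zero, abs_of_nonneg ht.1]
  have hfa : ∀ t ∈ Set.Icc (0:ℝ) l, |dist p (ξ t) - a| ≤ t := by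
    intro t ht
    have h1 := abs_dist_sub_le (ξ t) x p
    rw [hdx t ht] at h1
    calc |dist p (ξ t) - a| = |dist (ξ t) p - dist x p| := by
          rw [dist_comm p (ξ t), ha_def, dist_comm p x]
      _ ≤ t := h1
  -- key comparison inequality from S-concavity
  have key : ∀ u t : ℝ, 0 < u → u ≤ t → t ≤ l →
      (dist p (ξ t)^2 - a^2 - S*t*t) * u ≤ (dist p (ξ u)^2 - a^2 - S*u*u) * t := by
    intro u t hu hut htl
    have ht : 0 < t := hu.trans_le hut
    obtain ⟨s, hs0, hs1, rfl⟩ : ∃ s : ℝ, 0 ≤ s ∧ s ≤ 1 ∧ u = s*t :=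
      ⟨u/t, by positivity, by rw [div_le_one ht]; exact hut, (div_mul_cancel₀ u ht.ne').symm⟩
    have hmem : ∀ w : ℝ, w ∈ Set.Icc (0:ℝ) 1 → w * t ∈ Set.Icc (0:ℝ) l := by
      intro w hw
      refine ⟨mul_nonneg hw.1 ht.le, ?_⟩
      calc w * t ≤ 1 * t := by nlinarith [hw.2]
        _ ≤ l := by linarith
    have hγ : IsConstSpeedGeodesic (fun r : ℝ => ξ (r * t)) := by
      intro r hr r' hr'
      show dist (ξ (r*t)) (ξ (r'*t)) = |r - r'| * dist (ξ (0*t)) (ξ (1*t))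
      have h1 := hξ (r*t) (hmem r hr) (r'*t) (hmem r' hr')
      have h2 := hξ (0*t) (hmem 0 ⟨le_refl 0, zero_le_one⟩) (1*t) (hmem 1 ⟨zero_le_one, le_refl 1⟩)
      rw [h1, h2, zero_mul, one_mul, zero_sub, abs_neg, abs_of_pos ht,
        ← sub_mul, abs_mul, abs_of_pos ht]
    have hc := hconc p _ hγ s ⟨hs0, hs1⟩
    simp only [zero_mul, one_mul, hξ0] at hc
    have hdt : dist x (ξ t) = t := by
      rw [dist_comm]; exact hdx t ⟨ht.le, htl⟩
    rw [hdt] at hc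
    nlinarith [mul_le_mul_of_nonneg_left hc ht.le]
  set g : ℝ → ℝ := fun t => (dist p (ξ t)^2 - a^2)/t - S*t with hg_def
  have hanti : AntitoneOn g (Set.Ioo 0 l) := by
    intro u hu t ht hut
    have hu0 : 0 < u := hu.1
    have ht0 : 0 < t := hu0.trans_le hut
    have e : ∀ w : ℝ, 0 < w → g w = (dist p (ξ w)^2 - a^2 - S*w*w)/w := by
      intro w hw
      simp only [hg_def]
      field_simp
    rw [e t ht0, e u hu0, div_le_div_iff₀ ht0 hu0]
    exact key u t hu0 hut ht.2.le
  have hbd : ∀ t ∈ Set.Ioo (0:ℝ) l, |(dist p (ξ t)^2 - a^2)/t| ≤ 2*a + t := by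
    intro t ht
    have ht0 := ht.1
    have h1 := hfa t ⟨ht0.le, ht.2.le⟩
    have h1' := abs_le.1 h1
    have h2 : dist p (ξ t) + a ≤ 2*a + t := by linarith [h1'.1, h1'.2]
    have h3 : |dist p (ξ t)^2 - a^2| ≤ t * (2*a + t) := by
      have he : dist p (ξ t)^2 - a^2 = (dist p (ξ t) - a) * (dist p (ξ t) + a) := by ring
      rw [he, abs_mul, abs_of_nonneg (by positivity : (0:ℝ) ≤ dist p (ξ t) + a)]
      exact mul_le_mul h1 h2 (by positivity) ht0.le
    rw [abs_div, abs_of_pos ht0, div_le_iff₀ ht0]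
    nlinarith [h3]
  have hbdd : BddAbove (g '' Set.Ioo 0 l) := by
    refine ⟨2*a + l, ?_⟩
    rintro _ ⟨t, ht, rfl⟩
    have h5 := (abs_le.1 (hbd t ht)).2
    have h6 : 0 ≤ (S - 1) * t := mul_nonneg (by linarith) ht.1.le
    simp only [hg_def]
    have ht2 := ht.2
    linarith
  have hne : (Set.Ioo (0:ℝ) l).Nonempty := ⟨l/2, by constructor <;> linarith⟩
  have htendg : Tendsto g (𝓝[>] (0:ℝ)) (𝓝 (sSup (g '' Set.Ioo 0 l))) :=
    AntitoneOn.tendsto_nhdsWithin_Ioo_right hne hanti hbdd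
  set L := sSup (g '' Set.Ioo 0 l) with hL
  have htendh : Tendsto (fun t => (dist p (ξ t)^2 - a^2)/t) (𝓝[>] (0:ℝ)) (𝓝 L) := by
    have hst : Tendsto (fun t : ℝ => S * t) (𝓝[>] (0:ℝ)) (𝓝 (S * 0)) :=
      (tendsto_id.const_mul S).mono_left nhdsWithin_le_nhds
    have h1 : Tendsto (fun t : ℝ => g t + S*t) (𝓝[>] (0:ℝ)) (𝓝 (L + S*0)) :=
      htendg.add hst
    rw [mul_zero, add_zero] at h1
    refine h1.congr fun t => ?_
    simp only [hg_def]
    ring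
  have hLbound : |L| ≤ 2*a := by
    have habs : Tendsto (fun t => |(dist p (ξ t)^2 - a^2)/t|) (𝓝[>] (0:ℝ)) (𝓝 |L|) :=
      htendh.abs
    have hub : Tendsto (fun t : ℝ => 2*a + t) (𝓝[>] (0:ℝ)) (𝓝 (2*a + 0)) :=
      (tendsto_const_nhds.add tendsto_id).mono_left nhdsWithin_le_nhds
    rw [add_zero] at hub
    refine le_of_tendsto_of_tendsto habs hub ?_
    filter_upwards [Ioo_mem_nhdsGT hl] with t ht
    exact hbd t ht
  have hLb := abs_le.1 hLbound
  have htendf : Tendsto (fun t => dist p (ξ t)) (𝓝[>] (0:ℝ)) (𝓝 a) := by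
    have h0 : Tendsto (fun t : ℝ => dist p (ξ t) - a) (𝓝[>] (0:ℝ)) (𝓝 0) := by
      refine squeeze_zero_norm' ?_ (tendsto_id.mono_left nhdsWithin_le_nhds)
      filter_upwards [Ioo_mem_nhdsGT hl] with t ht
      simpa [Real.norm_eq_abs] using hfa t ⟨ht.1.le, ht.2.le⟩
    have h1 := h0.add (tendsto_const_nhds (x := a))
    simpa using h1
  have hden : Tendsto (fun t => dist p (ξ t) + a) (𝓝[>] (0:ℝ)) (𝓝 (2*a)) := by
    have h1 := htendf.add (tendsto_const_nhds (x := a))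
    simpa [two_mul] using h1
  have ha2 : (2*a : ℝ) ≠ 0 := by positivity
  have htendD : Tendsto (fun t => (dist p (ξ t) - a)/t) (𝓝[>] (0:ℝ)) (𝓝 (L/(2*a))) := by
    have h1 := htendh.div hden ha2
    refine Tendsto.congr' ?_ h1
    filter_upwards [self_mem_nhdsWithin] with t ht
    have ht0 : (0:ℝ) < t := ht
    have hda : 0 < dist p (ξ t) + a := by positivity
    show (dist p (ξ t)^2 - a^2)/t / (dist p (ξ t) + a) = (dist p (ξ t) - a)/t
    field_simp
    ring
  have hcosT : Tendsto (fun t => (a^2 + t^2 - dist p (ξ t)^2)/(2*a*t)) (𝓝[>] (0:ℝ))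
      (𝓝 (-(L/(2*a)))) := by
    have hid : Tendsto (fun t : ℝ => t/(2*a)) (𝓝[>] (0:ℝ)) (𝓝 ((0:ℝ)/(2*a))) :=
      (tendsto_id.div_const _).mono_left nhdsWithin_le_nhds
    have h1 := hid.sub (htendh.div_const (2*a))
    rw [zero_div, zero_sub] at h1
    refine Tendsto.congr' ?_ h1
    filter_upwards [self_mem_nhdsWithin] with t ht
    have ht0 : (0:ℝ) < t := ht
    field_simp
    ring
  refine ⟨Real.arccos (-(L/(2*a))), ?_, ?_⟩
  · have h1 := (Real.continuous_arccos.tendsto _).comp hcosT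
    refine Tendsto.congr' ?_ h1
    filter_upwards [Ioo_mem_nhdsGT hl] with t ht
    have hdt : dist x (ξ t) = t := by
      rw [dist_comm]; exact hdx t ⟨ht.1.le, ht.2.le⟩
    have hdxp : dist x p = a := by rw [dist_comm, ha_def]
    show Real.arccos _ = compAngle p x (ξ t)
    unfold compAngle
    rw [hdt, hdxp]
  · have h1 : L/(2*a) ≤ 1 := by
      rw [div_le_one (by positivity)]
      linarith
    have h2 : -1 ≤ L/(2*a) := by
      rw [le_div_iff₀ (by positivity : (0:ℝ) < 2*a)]
      linarith
    have hcosA : Real.cos (Real.arccos (-(L/(2*a)))) = -(L/(2*a)) :=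
      Real.cos_arccos (by linarith) (by linarith)
    rw [hcosA, neg_neg]
    exact htendD
end
end

section
/- Let X be a (C,D)-locally semi-convex complete geodesic space (C ≥ 0, D > 0), let p, x ∈ X with p ≠ x and dist(p,x) < D, and let ξ : [0,l] → X with l > 0 be a unit-speed geodesic with ξ 0 = x. Then the limit ∠pxξ := lim_{t→0⁺} ∠̃(p, x, ξ t) exists, and there exists t₀ ∈ (0, l] such that for every t ∈ (0, t₀] one has ∠̃(p, x, ξ t) ≥ ∠pxξ − arccos(1 − (C+1)·t/(2·dist(p,x))). -/
open Set Metric MeasureTheory Filter Topology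

noncomputable section

variable {X : Type*} [MetricSpace X]

lemma arccos_antitone' : Antitone Real.arccos := fun x y h => by
  simp only [Real.arccos]
  linarith [Real.monotone_arcsin h]

lemma arccos_key' {c ε : ℝ} (hc : -1 ≤ c) (hc1 : c ≤ 1) (hε : 0 ≤ ε) :
    Real.arccos c ≤ Real.arccos (c + ε) + Real.arccos (1 - ε) := by
  rcases le_or_gt 1 (c + ε) with h1 | h1
  · have h2 := arccos_antitone' (show (1:ℝ) - ε ≤ c by linarith)
    linarith [Real.arccos_nonneg (c + ε)]
  · set α := Real.arccos (c + ε) with hα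
    set β := Real.arccos (1 - ε) with hβ
    have hε2 : ε ≤ 2 := by linarith
    have hα1 : 0 ≤ α := Real.arccos_nonneg _
    have hα2 : α ≤ Real.pi := Real.arccos_le_pi _
    have hβ1 : 0 ≤ β := Real.arccos_nonneg _
    have hβ2 : β ≤ Real.pi := Real.arccos_le_pi _
    rcases le_or_gt Real.pi (α + β) with hπ | hπ
    · linarith [Real.arccos_le_pi c]
    · have hmem1 : Real.arccos c ∈ Set.Icc 0 Real.pi :=
        ⟨Real.arccos_nonneg _, Real.arccos_le_pi _⟩
      have hmem2 : α + β ∈ Set.Icc 0 Real.pi := ⟨by linarith, hπ.le⟩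
      have hcos : Real.cos (α + β) ≤ Real.cos (Real.arccos c) := by
        rw [Real.cos_arccos hc hc1, Real.cos_add, hα, hβ,
          Real.cos_arccos (by linarith) h1.le,
          Real.cos_arccos (by linarith) (by linarith),
          Real.sin_arccos, Real.sin_arccos]
        have key : ε * (1 - c - ε) ≤ Real.sqrt (1 - (c+ε)^2) * Real.sqrt (1 - (1-ε)^2) := by
          rcases le_or_gt (1 - c - ε) 0 with h2 | h2
          · have s1 := Real.sqrt_nonneg (1 - (c+ε)^2)
            have s2 := Real.sqrt_nonneg (1 - (1-ε)^2)
            nlinarith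
          · rw [← Real.sqrt_mul (by nlinarith)]
            rw [show ε * (1 - c - ε) = Real.sqrt ((ε * (1-c-ε))^2) from
              (Real.sqrt_sq (by nlinarith)).symm]
            apply Real.sqrt_le_sqrt
            nlinarith [mul_nonneg (mul_nonneg hε h2.le) (show (0:ℝ) ≤ 1 + c by linarith)]
        nlinarith
      exact (Real.strictAntiOn_cos.le_iff_ge hmem2 hmem1).mp hcos

/-- in locally semi-convex spaces the angle viewed from a nearby
point is well defined and satisfies the lower almost comparison inequality. -/
theorem stmt_11 {X : Type*} [MetricSpace X] [CompleteSpace X]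
    (C D : ℝ) (hC : 0 ≤ C) (hD : 0 < D)
    (hgeo : IsGeodesicSpace X) (hsemi : LocSemiConvex X C D)
    (p x : X) (hpx : p ≠ x) (hpD : dist p x < D) (l : ℝ) (hl : 0 < l)
    (ξ : ℝ → X) (hξ : IsUnitSpeedGeodesicOn ξ 0 l) (hξ0 : ξ 0 = x) :
    ∃ A : ℝ,
      Filter.Tendsto (fun t => compAngle p x (ξ t)) (𝓝[>] (0 : ℝ)) (𝓝 A) ∧
      ∃ t₀ : ℝ, 0 < t₀ ∧ t₀ ≤ l ∧
        ∀ t ∈ Set.Ioc (0 : ℝ) t₀,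
          A - Real.arccos (1 - (C + 1) * t / (2 * dist p x)) ≤ compAngle p x (ξ t) := by
  have hd : 0 < dist p x := dist_pos.2 hpx
  set d := dist p x with hdd
  set t₁ := min l ((D - d)/2) with ht₁def
  have ht₁pos : 0 < t₁ := lt_min hl (by simp only [hdd]; linarith)
  have ht₁l : t₁ ≤ l := min_le_left _ _
  have ht₁D : d + t₁ < D := by
    have h := min_le_right l ((D - d)/2)
    simp only [← ht₁def] at h
    linarith
  have hdx : ∀ s ∈ Set.Icc (0:ℝ) l, dist x (ξ s) = s := by
    intro s hs
    have h := hξ 0 ⟨le_refl 0, hl.le⟩ s hs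
    rw [hξ0] at h
    rw [h, abs_sub_comm, sub_zero, abs_of_nonneg hs.1]
  set ψ : ℝ → ℝ := fun t => (dist p (ξ t)^2 + C * t^2 - d^2)/t with hψdef
  -- monotonicity of ψ on (0, t₁)
  have hmono : MonotoneOn ψ (Set.Ioo 0 t₁) := by
    rintro s ⟨hs0, hst₁⟩ t ⟨ht0, htt₁⟩ hst
    have htl : t ≤ l := le_trans htt₁.le ht₁l
    set γ : ℝ → X := fun u => ξ (u * t) with hγdef
    have hd01 : dist (γ 0) (γ 1) = t := by
      simp only [hγdef, zero_mul, one_mul]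
      have h := hξ 0 ⟨le_refl 0, hl.le⟩ t ⟨ht0.le, htl⟩
      rw [h, abs_sub_comm, sub_zero, abs_of_nonneg ht0.le]
    have hγgeo : IsConstSpeedGeodesic γ := by
      intro u hu v hv
      rw [hd01]
      have h1 : u * t ∈ Set.Icc (0:ℝ) l :=
        ⟨mul_nonneg hu.1 ht0.le, by nlinarith [hu.2]⟩
      have h2 : v * t ∈ Set.Icc (0:ℝ) l :=
        ⟨mul_nonneg hv.1 ht0.le, by nlinarith [hv.2]⟩
      have h := hξ (u*t) h1 (v*t) h2
      simp only [hγdef]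
      rw [h, ← sub_mul, abs_mul, abs_of_nonneg ht0.le]
    have hγ0 : γ 0 = x := by simp only [hγdef, zero_mul, hξ0]
    have hγ1 : γ 1 = ξ t := by simp only [hγdef, one_mul]
    have hbdd : ∀ u ∈ Set.Icc (0:ℝ) 1, dist p (γ u) < D := by
      intro u hu
      have h1 : u * t ∈ Set.Icc (0:ℝ) l :=
        ⟨mul_nonneg hu.1 ht0.le, by nlinarith [hu.2]⟩
      have hut : u * t ≤ t := by nlinarith [hu.2, hu.1]
      calc dist p (γ u) ≤ dist p x + dist x (ξ (u*t)) := dist_triangle _ _ _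
        _ = d + u*t := by rw [hdx (u*t) h1]
        _ < D := by linarith [htt₁.le]
    have hu01 : s/t ∈ Set.Icc (0:ℝ) 1 :=
      ⟨div_nonneg hs0.le ht0.le, div_le_one_of_le₀ hst ht0.le⟩
    have hsc := hsemi p γ hγgeo hbdd (s/t) hu01
    rw [hd01, hγ0, hγ1] at hsc
    have hγst : γ (s/t) = ξ s := by
      simp only [hγdef]; rw [div_mul_cancel₀ _ (ne_of_gt ht0)]
    rw [hγst] at hsc
    simp only [hψdef, ← hdd]
    rw [div_le_div_iff₀ hs0 ht0]
    have key := mul_le_mul_of_nonneg_right hsc ht0.le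
    have expand : ((1 - s/t) * dist p x ^2 + (s/t)*dist p (ξ t)^2
        + C*(s/t)*(1-(s/t))*t^2) * t
        = (t - s)* dist p x ^2 + s*dist p (ξ t)^2 + C*s*(t-s)*t := by
      field_simp
    rw [expand] at key
    nlinarith [key]
  have hIoo_ne : (Set.Ioo (0:ℝ) t₁).Nonempty := ⟨t₁/2, by constructor <;> linarith⟩
  -- lower bound for ψ
  have hψlb : ∀ t ∈ Set.Ioo (0:ℝ) t₁, -2*d ≤ ψ t := by
    rintro t ⟨ht0, htt₁⟩
    have hxt : dist x (ξ t) = t := hdx t ⟨ht0.le, le_trans htt₁.le ht₁l⟩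
    have habs : |d - t| ≤ dist p (ξ t) := by
      have h := abs_dist_sub_le p (ξ t) x
      rw [dist_comm (ξ t) x, hxt] at h
      exact h
    have hsq : (d - t)^2 ≤ dist p (ξ t)^2 := by
      rw [← sq_abs (d - t)]
      exact pow_le_pow_left₀ (abs_nonneg _) habs 2
    simp only [hψdef]
    rw [le_div_iff₀ ht0]
    nlinarith
  have hbddbelow : BddBelow (ψ '' Set.Ioo 0 t₁) := by
    refine ⟨-2*d, ?_⟩
    rintro y ⟨t, ht, rfl⟩
    exact hψlb t ht
  set L := sInf (ψ '' Set.Ioo 0 t₁) with hLdef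
  have hψlim : Filter.Tendsto ψ (𝓝[>] (0:ℝ)) (𝓝 L) :=
    MonotoneOn.tendsto_nhdsWithin_Ioo_right hIoo_ne hmono hbddbelow
  have hLle : ∀ t ∈ Set.Ioo (0:ℝ) t₁, L ≤ ψ t := fun t ht =>
    csInf_le hbddbelow (Set.mem_image_of_mem _ ht)
  -- upper bound for ψ
  have hψub : ∀ t ∈ Set.Ioo (0:ℝ) t₁, ψ t ≤ 2*d + (C+1)*t := by
    rintro t ⟨ht0, htt₁⟩
    have hxt : dist x (ξ t) = t := hdx t ⟨ht0.le, le_trans htt₁.le ht₁l⟩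
    have htri : dist p (ξ t) ≤ d + t := by
      have h := dist_triangle p x (ξ t)
      rw [hxt] at h; exact h
    have hsq : dist p (ξ t)^2 ≤ (d + t)^2 := by
      apply pow_le_pow_left₀ dist_nonneg htri
    simp only [hψdef]
    rw [div_le_iff₀ ht0]
    nlinarith
  -- L bounds
  have hL1 : -2*d ≤ L := le_csInf (hIoo_ne.image _) (by
    rintro y ⟨t, ht, rfl⟩; exact hψlb t ht)
  have hL2 : L ≤ 2*d := by
    have hub : Filter.Tendsto (fun t : ℝ => 2*d + (C+1)*t) (𝓝[>] (0:ℝ)) (𝓝 (2*d)) := by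
      have h : Filter.Tendsto (fun t : ℝ => 2*d + (C+1)*t) (𝓝 (0:ℝ)) (𝓝 (2*d + (C+1)*0)) :=
        (continuous_const.add (continuous_const.mul continuous_id)).tendsto 0
      simpa using h.mono_left nhdsWithin_le_nhds
    refine le_of_tendsto_of_tendsto hψlim hub ?_
    filter_upwards [Ioo_mem_nhdsGT_of_mem ⟨le_refl (0:ℝ), ht₁pos⟩] with t ht
    exact hψub t ht
  -- the cosine function
  set g : ℝ → ℝ := fun t => (-ψ t + (C+1)*t)/(2*d) with hgdef
  have hcomp : ∀ t ∈ Set.Ioo (0:ℝ) t₁,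
      compAngle p x (ξ t) = Real.arccos (g t) := by
    rintro t ⟨ht0, htt₁⟩
    have hxt : dist x (ξ t) = t := hdx t ⟨ht0.le, le_trans htt₁.le ht₁l⟩
    have hxp : dist x p = d := by rw [dist_comm]
    unfold compAngle
    rw [hxt, hxp]
    congr 1
    simp only [hgdef, hψdef]
    field_simp
    ring
  set c₀ := -L/(2*d) with hc₀def
  have hc₀1 : -1 ≤ c₀ := by
    rw [hc₀def, le_div_iff₀ (by linarith : (0:ℝ) < 2*d)]
    linarith
  have hc₀2 : c₀ ≤ 1 := by
    rw [hc₀def, div_le_one (by linarith : (0:ℝ) < 2*d)]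
    linarith
  refine ⟨Real.arccos c₀, ?_, t₁/2, by linarith, by linarith, ?_⟩
  · -- the limit
    have hlin : Filter.Tendsto (fun t : ℝ => (C+1)*t) (𝓝[>] (0:ℝ)) (𝓝 0) := by
      have h : Filter.Tendsto (fun t : ℝ => (C+1)*t) (𝓝 (0:ℝ)) (𝓝 ((C+1)*0)) :=
        (continuous_const.mul continuous_id).tendsto 0
      simpa using h.mono_left nhdsWithin_le_nhds
    have hglim : Filter.Tendsto g (𝓝[>] (0:ℝ)) (𝓝 c₀) := by
      have h := (hψlim.neg.add hlin).div_const (2*d)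
      simp only [add_zero] at h
      exact h
    have harc : Filter.Tendsto (fun t => Real.arccos (g t)) (𝓝[>] (0:ℝ))
        (𝓝 (Real.arccos c₀)) :=
      (Real.continuous_arccos.continuousAt.tendsto).comp hglim
    refine harc.congr' ?_
    filter_upwards [Ioo_mem_nhdsGT_of_mem ⟨le_refl (0:ℝ), ht₁pos⟩] with t ht
    exact (hcomp t ht).symm
  · -- the inequality
    rintro t ⟨ht0, htt₁⟩
    have htmem : t ∈ Set.Ioo (0:ℝ) t₁ := ⟨ht0, by linarith⟩
    rw [hcomp t htmem]
    set ε := (C+1)*t/(2*d) with hεdef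
    have hε : 0 ≤ ε := by
      apply div_nonneg (by nlinarith) (by linarith)
    have hgle : g t ≤ c₀ + ε := by
      simp only [hgdef, hc₀def, hεdef]
      rw [← add_div]
      apply div_le_div_of_nonneg_right (by linarith [hLle t htmem]) (by linarith)
    have h1 : Real.arccos (c₀ + ε) ≤ Real.arccos (g t) := arccos_antitone' hgle
    have h2 := arccos_key' hc₀1 hc₀2 hε
    have heq : 1 - (C + 1) * t / (2 * d) = 1 - ε := by rw [hεdef]
    rw [heq]
    linarith only [h1, h2]
end
end

section
/- Let X be an S-concave complete geodesic space with S ≥ 1, let ε > 0, and let γ : [−ε, ε] → X be a unit-speed geodesic (dist(γ s, γ t) = |s − t| for all s, t ∈ [−ε, ε]); set x := γ 0 and let p ∈ X with p ≠ x. Define unit-speed geodesics ξ, η : [0, ε] → X by ξ t := γ t and η t := γ(−t). Then ∠pxξ + ∠pxη ≤ π, where ∠pxξ := lim_{t→0⁺} ∠̃(p, x, ξ t) and ∠pxη := lim_{t→0⁺} ∠̃(p, x, η t) (these limits exist by S-concavity). -/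
open Set Metric MeasureTheory Filter Topology

noncomputable section

variable {X : Type*} [MetricSpace X]

/-- the two angles viewed from `p` at `x` along the two branches of
a unit-speed geodesic through `x` sum to at most `π`. -/
theorem stmt_12 {X : Type*} [MetricSpace X] [CompleteSpace X]
    (S : ℝ) (hS : 1 ≤ S) (hgeo : IsGeodesicSpace X) (hconc : SConcave X S)
    (ε : ℝ) (hε : 0 < ε) (γ : ℝ → X) (hγ : IsUnitSpeedGeodesicOn γ (-ε) ε)
    (p : X) (hpx : p ≠ γ 0) :
    ∃ A B : ℝ,
      Filter.Tendsto (fun t => compAngle p (γ 0) (γ t)) (𝓝[>] (0 : ℝ)) (𝓝 A) ∧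
      Filter.Tendsto (fun t => compAngle p (γ 0) (γ (-t))) (𝓝[>] (0 : ℝ)) (𝓝 B) ∧
      A + B ≤ Real.pi := by
  have hxm : (0:ℝ) ∈ Set.Icc (-ε) ε := ⟨by linarith, hε.le⟩
  set d := dist (γ 0) p with hdd
  have hd : 0 < d := by rw [hdd]; exact dist_pos.2 (Ne.symm hpx)
  have hpd : dist p (γ 0) = d := by rw [hdd, dist_comm]
  -- key concavity inequality (cleared of denominators)
  have key : ∀ a c b : ℝ, -ε ≤ a → a < c → c < b → b ≤ ε →
      (b - c) * dist p (γ a) ^ 2 + (c - a) * dist p (γ b) ^ 2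
        - S * (c - a) * (b - c) * (b - a) ≤ (b - a) * dist p (γ c) ^ 2 := by
    intro a c b ha hac hcb hbe
    have hba : (0:ℝ) < b - a := by linarith
    have hmem : ∀ u ∈ Set.Icc (0:ℝ) 1, a + u * (b - a) ∈ Set.Icc (-ε) ε := by
      intro u hu
      constructor <;> nlinarith [hu.1, hu.2]
    have hδ : IsConstSpeedGeodesic (fun u => γ (a + u * (b - a))) := by
      intro s hs t ht
      simp only
      rw [hγ _ (hmem s hs) _ (hmem t ht),
        hγ _ (hmem 0 ⟨le_refl 0, zero_le_one⟩) _ (hmem 1 ⟨zero_le_one, le_refl 1⟩),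
        show a + s * (b - a) - (a + t * (b - a)) = (s - t) * (b - a) by ring,
        show a + 0 * (b - a) - (a + 1 * (b - a)) = -(b - a) by ring,
        abs_mul, abs_neg, abs_of_pos hba]
    have h := hconc p _ hδ ((c - a)/(b - a))
      ⟨div_nonneg (by linarith) hba.le, by rw [div_le_one hba]; linarith⟩
    rw [show a + (c - a)/(b - a) * (b - a) = c by field_simp; ring,
      show a + (0:ℝ) * (b - a) = a by ring,
      show a + (1:ℝ) * (b - a) = b by ring] at h
    have hab : dist (γ a) (γ b) = b - a := by
      rw [hγ a ⟨ha, by linarith⟩ b ⟨by linarith, hbe⟩, abs_sub_comm,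
        abs_of_pos hba]
    rw [hab, show 1 - (c - a)/(b - a) = (b - c)/(b - a) by field_simp; ring] at h
    calc (b - c) * dist p (γ a) ^ 2 + (c - a) * dist p (γ b) ^ 2
          - S * (c - a) * (b - c) * (b - a)
        = (b - a) * ((b - c)/(b - a) * dist p (γ a) ^ 2
            + (c - a)/(b - a) * dist p (γ b) ^ 2
            - S * ((c - a)/(b - a)) * ((b - c)/(b - a)) * (b - a) ^ 2) := by
          field_simp
      _ ≤ (b - a) * dist p (γ c) ^ 2 := mul_le_mul_of_nonneg_left h hba.le
  set m : ℝ → ℝ := fun t => (dist p (γ t) ^ 2 - d ^ 2 - S * t ^ 2) / t with hm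
  -- slope monotonicity on the positive side
  have hmonoP : ∀ s t : ℝ, 0 < s → s < t → t ≤ ε → m t ≤ m s := by
    intro s t hs hst htε
    have hk := key 0 s t (by linarith) hs hst htε
    rw [hpd] at hk
    rw [hm]
    simp only
    rw [div_le_div_iff₀ (by linarith) hs]
    nlinarith [hk]
  -- across zero
  have hcross : ∀ s t : ℝ, -ε ≤ s → s < 0 → 0 < t → t ≤ ε → m t ≤ m s := by
    intro s t hsε hs ht htε
    have hk := key s 0 t hsε hs ht htε
    rw [hpd] at hk
    rw [hm]
    simp only
    rw [show (dist p (γ s) ^ 2 - d ^ 2 - S * s ^ 2) / s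
        = (-(dist p (γ s) ^ 2 - d ^ 2 - S * s ^ 2)) / (-s) from
        (neg_div_neg_eq _ _).symm,
      div_le_div_iff₀ ht (by linarith : (0:ℝ) < -s)]
    nlinarith [hk]
  -- negative side
  have hmonoN : ∀ s u : ℝ, -ε ≤ s → s < u → u < 0 → m u ≤ m s := by
    intro s u hsε hsu hu
    have hk := key s u 0 hsε hsu hu hε.le
    rw [hpd] at hk
    rw [hm]
    simp only
    rw [show (dist p (γ u) ^ 2 - d ^ 2 - S * u ^ 2) / u
        = (-(dist p (γ u) ^ 2 - d ^ 2 - S * u ^ 2)) / (-u) from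
        (neg_div_neg_eq _ _).symm,
      show (dist p (γ s) ^ 2 - d ^ 2 - S * s ^ 2) / s
        = (-(dist p (γ s) ^ 2 - d ^ 2 - S * s ^ 2)) / (-s) from
        (neg_div_neg_eq _ _).symm,
      div_le_div_iff₀ (by linarith : (0:ℝ) < -u) (by linarith : (0:ℝ) < -s)]
    nlinarith [hk]
  have hne : (Set.Ioo (0:ℝ) ε).Nonempty := ⟨ε/2, by constructor <;> linarith⟩
  -- limit from the right
  have hanti : AntitoneOn m (Set.Ioo 0 ε) := by
    intro s hs t ht hst
    rcases eq_or_lt_of_le hst with rfl | h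
    · exact le_refl _
    · exact hmonoP s t hs.1 h ht.2.le
  have hbddA : BddAbove (m '' Set.Ioo 0 ε) := by
    refine ⟨m (-(ε/2)), ?_⟩
    rintro _ ⟨t, ht, rfl⟩
    exact hcross (-(ε/2)) t (by linarith) (by linarith) ht.1 ht.2.le
  have hA := hanti.tendsto_nhdsWithin_Ioo_right hne hbddA
  set Lp := sSup (m '' Set.Ioo 0 ε) with hLp
  -- limit from the left (as a function of -t, t → 0+)
  have hmonoM : MonotoneOn (fun t => m (-t)) (Set.Ioo (0:ℝ) ε) := by
    intro s hs t ht hst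
    rcases eq_or_lt_of_le hst with rfl | h
    · exact le_refl _
    · exact hmonoN (-t) (-s) (by linarith [ht.2]) (by linarith) (by linarith [hs.1])
  have hbddB : BddBelow ((fun t => m (-t)) '' Set.Ioo 0 ε) := by
    refine ⟨m (ε/2), ?_⟩
    rintro _ ⟨t, ht, rfl⟩
    exact hcross (-t) (ε/2) (by linarith [ht.2]) (by linarith [ht.1]) (by linarith) (by linarith)
  have hB := hmonoM.tendsto_nhdsWithin_Ioo_right hne hbddB
  set Ln := sInf ((fun t => m (-t)) '' Set.Ioo 0 ε) with hLn
  have hLL : Lp ≤ Ln := by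
    refine csSup_le (hne.image _) ?_
    rintro _ ⟨t, ht, rfl⟩
    refine le_csInf (hne.image _) ?_
    rintro _ ⟨u, hu, rfl⟩
    exact hcross (-u) t (by linarith [hu.2]) (by linarith [hu.1]) ht.1 ht.2.le
  have hlin : Tendsto (fun t : ℝ => (S - 1) * t) (𝓝[>] (0:ℝ)) (𝓝 0) := by
    have h0 : Tendsto (fun t : ℝ => (S - 1) * t) (𝓝 0) (𝓝 ((S - 1) * 0)) :=
      (continuous_const.mul continuous_id).tendsto 0
    simpa using h0.mono_left (nhdsWithin_le_nhds (s := Set.Ioi (0:ℝ)))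
  have harccos_anti : ∀ x y : ℝ, x ≤ y → Real.arccos y ≤ Real.arccos x := by
    intro x y h
    simp only [Real.arccos_eq_pi_div_two_sub_arcsin]
    linarith [Real.monotone_arcsin h]
  refine ⟨Real.arccos (-Lp/(2*d)), Real.arccos (Ln/(2*d)), ?_, ?_, ?_⟩
  · -- positive branch
    have hc : Tendsto (fun t => (-m t - (S-1)*t)/(2*d)) (𝓝[>] (0:ℝ)) (𝓝 (-Lp/(2*d))) := by
      have := (hA.neg.sub hlin).div_const (2*d)
      simpa using this
    have htd := (Real.continuous_arccos.continuousAt (x := -Lp/(2*d))).tendsto.comp hc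
    refine htd.congr' ?_
    filter_upwards [Ioo_mem_nhdsGT_of_mem (⟨le_refl 0, hε⟩ : (0:ℝ) ∈ Set.Ico 0 ε)] with t ht
    have h0t : dist (γ 0) (γ t) = t := by
      rw [hγ 0 hxm t ⟨by linarith [ht.1], ht.2.le⟩, zero_sub, abs_neg, abs_of_pos ht.1]
    show Real.arccos _ = compAngle p (γ 0) (γ t)
    unfold compAngle
    rw [h0t, ← hdd]
    congr 1
    rw [hm]
    simp only
    field_simp [ht.1.ne', hd.ne']
    ring
  · -- negative branch
    have hc : Tendsto (fun t => (m (-t) - (S-1)*t)/(2*d)) (𝓝[>] (0:ℝ)) (𝓝 (Ln/(2*d))) := by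
      have := (hB.sub hlin).div_const (2*d)
      simpa using this
    have htd := (Real.continuous_arccos.continuousAt (x := Ln/(2*d))).tendsto.comp hc
    refine htd.congr' ?_
    filter_upwards [Ioo_mem_nhdsGT_of_mem (⟨le_refl 0, hε⟩ : (0:ℝ) ∈ Set.Ico 0 ε)] with t ht
    have h0t : dist (γ 0) (γ (-t)) = t := by
      rw [hγ 0 hxm (-t) ⟨by linarith [ht.2], by linarith [ht.1]⟩, zero_sub, abs_neg, abs_neg,
        abs_of_pos ht.1]
    show Real.arccos _ = compAngle p (γ 0) (γ (-t))
    unfold compAngle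
    rw [h0t, ← hdd]
    congr 1
    rw [hm]
    simp only
    field_simp [ht.1.ne', hd.ne']
    ring
  · -- sum of the two angles
    have h1 : -Ln/(2*d) ≤ -Lp/(2*d) :=
      div_le_div_of_nonneg_right (neg_le_neg hLL) (by positivity) |>.trans_eq rfl
    calc Real.arccos (-Lp/(2*d)) + Real.arccos (Ln/(2*d))
        ≤ Real.arccos (-Ln/(2*d)) + Real.arccos (Ln/(2*d)) := by
          have := harccos_anti _ _ h1
          linarith
      _ = Real.pi - Real.arccos (Ln/(2*d)) + Real.arccos (Ln/(2*d)) := by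
          rw [show -Ln/(2*d) = -(Ln/(2*d)) by ring, Real.arccos_neg]
      _ ≤ Real.pi := by linarith
end
end

section
/- Let X be a Busemann concave complete geodesic space, let x ∈ X, and let γ, η : [0, a] → X with a > 0 be unit-speed geodesics with γ 0 = η 0 = x. Then for all t, s > 0: (i) the limit A(t,s) := lim_{θ→0⁺} ∠̃(γ(θt), x, η(θs)) exists and equals the supremum of ∠̃(γ(θt), x, η(θs)) over θ ∈ (0, min(1, a/t, a/s)]; (ii) the limit L(t,s) := lim_{θ→0⁺} dist(γ(θt), η(θs))/θ exists and satisfies L(t,s)² = t² + s² − 2·t·s·cos(A(t,s)); (iii) A(λt, λs) = A(t,s) for every λ > 0, so A(t,s) depends only on the ratio t/s. -/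
open Set Metric MeasureTheory Filter Topology

noncomputable section

variable {X : Type*} [MetricSpace X]

/-- the angle of fixed scale in a Busemann concave space is well
defined (limit = supremum), related to the limit distance by the law of cosines,
and invariant under positive scaling. -/
theorem stmt_13 {X : Type*} [MetricSpace X] [CompleteSpace X]
    (hgeo : IsGeodesicSpace X) (hbus : BusemannConcave X)
    (x : X) (a : ℝ) (ha : 0 < a) (γ η : ℝ → X)
    (hγ : IsUnitSpeedGeodesicOn γ 0 a) (hη : IsUnitSpeedGeodesicOn η 0 a)
    (hγ0 : γ 0 = x) (hη0 : η 0 = x) :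
    ∀ t s : ℝ, 0 < t → 0 < s →
      ∃ A L : ℝ,
        Filter.Tendsto (fun θ => compAngle (γ (θ * t)) x (η (θ * s)))
          (𝓝[>] (0 : ℝ)) (𝓝 A) ∧
        IsLUB ((fun θ => compAngle (γ (θ * t)) x (η (θ * s))) ''
          Set.Ioc (0 : ℝ) (min 1 (min (a / t) (a / s)))) A ∧
        Filter.Tendsto (fun θ => dist (γ (θ * t)) (η (θ * s)) / θ)
          (𝓝[>] (0 : ℝ)) (𝓝 L) ∧
        L ^ 2 = t ^ 2 + s ^ 2 - 2 * t * s * Real.cos A ∧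
        ∀ lam : ℝ, 0 < lam →
          Filter.Tendsto (fun θ => compAngle (γ (θ * (lam * t))) x (η (θ * (lam * s))))
            (𝓝[>] (0 : ℝ)) (𝓝 A) := by
  intro t s ht hs
  set θm : ℝ := min 1 (min (a / t) (a / s)) with hθmdef
  have hθm_pos : 0 < θm := lt_min one_pos (lt_min (div_pos ha ht) (div_pos ha hs))
  have hθm_le1 : θm ≤ 1 := min_le_left _ _
  have h0mem : (0:ℝ) ∈ Set.Icc (0:ℝ) a := ⟨le_rfl, ha.le⟩
  have hmemγ : ∀ θ : ℝ, 0 ≤ θ → θ ≤ θm → θ * t ∈ Set.Icc (0:ℝ) a := by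
    intro θ h0 h1
    have hta : θ ≤ a / t := h1.trans ((min_le_right _ _).trans (min_le_left _ _))
    refine ⟨by positivity, ?_⟩
    calc θ * t ≤ (a / t) * t := by nlinarith
      _ = a := by field_simp
  have hmemη : ∀ θ : ℝ, 0 ≤ θ → θ ≤ θm → θ * s ∈ Set.Icc (0:ℝ) a := by
    intro θ h0 h1
    have hsa : θ ≤ a / s := h1.trans ((min_le_right _ _).trans (min_le_right _ _))
    refine ⟨by positivity, ?_⟩
    calc θ * s ≤ (a / s) * s := by nlinarith
      _ = a := by field_simp
  have hdγ : ∀ θ : ℝ, 0 ≤ θ → θ ≤ θm → dist x (γ (θ * t)) = θ * t := by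
    intro θ h0 h1
    rw [← hγ0, hγ 0 h0mem (θ * t) (hmemγ θ h0 h1), zero_sub, abs_neg,
      abs_of_nonneg (by positivity)]
  have hdη : ∀ θ : ℝ, 0 ≤ θ → θ ≤ θm → dist x (η (θ * s)) = θ * s := by
    intro θ h0 h1
    rw [← hη0, hη 0 h0mem (θ * s) (hmemη θ h0 h1), zero_sub, abs_neg,
      abs_of_nonneg (by positivity)]
  -- monotonicity from Busemann concavity
  have hmono : ∀ θ₁ θ₂ : ℝ, 0 < θ₁ → θ₁ ≤ θ₂ → θ₂ ≤ θm →
      dist (γ (θ₂ * t)) (η (θ₂ * s)) / θ₂ ≤ dist (γ (θ₁ * t)) (η (θ₁ * s)) / θ₁ := by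
    intro θ₁ θ₂ h1 h12 h2
    have h2pos : 0 < θ₂ := h1.trans_le h12
    have hcγ : IsConstSpeedGeodesic (fun u => γ (u * (θ₂ * t))) := by
      intro u hu v hv
      have hmu : u * (θ₂ * t) ∈ Set.Icc (0:ℝ) a := by
        rw [← mul_assoc]; exact hmemγ (u * θ₂) (mul_nonneg hu.1 h2pos.le) (by nlinarith [hu.1, hu.2])
      have hmv : v * (θ₂ * t) ∈ Set.Icc (0:ℝ) a := by
        rw [← mul_assoc]; exact hmemγ (v * θ₂) (mul_nonneg hv.1 h2pos.le) (by nlinarith [hv.1, hv.2])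
      have hm0 : (0:ℝ) * (θ₂ * t) ∈ Set.Icc (0:ℝ) a := by
        rw [zero_mul]; exact h0mem
      have hm1 : (1:ℝ) * (θ₂ * t) ∈ Set.Icc (0:ℝ) a := by
        rw [← mul_assoc]; exact hmemγ (1 * θ₂) (by positivity) (by nlinarith)
      show dist (γ (u * (θ₂ * t))) (γ (v * (θ₂ * t))) =
        |u - v| * dist (γ (0 * (θ₂ * t))) (γ (1 * (θ₂ * t)))
      rw [hγ _ hmu _ hmv, hγ _ hm0 _ hm1,
        show u * (θ₂ * t) - v * (θ₂ * t) = (u - v) * (θ₂ * t) by ring,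
        show (0:ℝ) * (θ₂ * t) - 1 * (θ₂ * t) = -(θ₂ * t) by ring,
        abs_mul, abs_neg, abs_of_nonneg (by positivity : (0:ℝ) ≤ θ₂ * t)]
    have hcη : IsConstSpeedGeodesic (fun u => η (u * (θ₂ * s))) := by
      intro u hu v hv
      have hmu : u * (θ₂ * s) ∈ Set.Icc (0:ℝ) a := by
        rw [← mul_assoc]; exact hmemη (u * θ₂) (mul_nonneg hu.1 h2pos.le) (by nlinarith [hu.1, hu.2])
      have hmv : v * (θ₂ * s) ∈ Set.Icc (0:ℝ) a := by
        rw [← mul_assoc]; exact hmemη (v * θ₂) (mul_nonneg hv.1 h2pos.le) (by nlinarith [hv.1, hv.2])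
      have hm0 : (0:ℝ) * (θ₂ * s) ∈ Set.Icc (0:ℝ) a := by
        rw [zero_mul]; exact h0mem
      have hm1 : (1:ℝ) * (θ₂ * s) ∈ Set.Icc (0:ℝ) a := by
        rw [← mul_assoc]; exact hmemη (1 * θ₂) (by positivity) (by nlinarith)
      show dist (η (u * (θ₂ * s))) (η (v * (θ₂ * s))) =
        |u - v| * dist (η (0 * (θ₂ * s))) (η (1 * (θ₂ * s)))
      rw [hη _ hmu _ hmv, hη _ hm0 _ hm1,
        show u * (θ₂ * s) - v * (θ₂ * s) = (u - v) * (θ₂ * s) by ring,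
        show (0:ℝ) * (θ₂ * s) - 1 * (θ₂ * s) = -(θ₂ * s) by ring,
        abs_mul, abs_neg, abs_of_nonneg (by positivity : (0:ℝ) ≤ θ₂ * s)]
    have h := hbus _ _ hcγ hcη (by simp [hγ0, hη0]) (θ₁ / θ₂) 1
      (div_pos h1 h2pos) (by rw [div_le_one h2pos]; exact h12) le_rfl
    simp only [one_mul] at h
    rw [show θ₁ / θ₂ * (θ₂ * t) = θ₁ * t by field_simp,
      show θ₁ / θ₂ * (θ₂ * s) = θ₁ * s by field_simp,
      div_one, le_div_iff₀ (div_pos h1 h2pos)] at h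
    rw [div_le_div_iff₀ h2pos h1]
    calc dist (γ (θ₂ * t)) (η (θ₂ * s)) * θ₁
        = dist (γ (θ₂ * t)) (η (θ₂ * s)) * (θ₁ / θ₂) * θ₂ := by field_simp
      _ ≤ dist (γ (θ₁ * t)) (η (θ₁ * s)) * θ₂ := by nlinarith
  set f : ℝ → ℝ := fun θ => dist (γ (θ * t)) (η (θ * s)) / θ with hfdef
  have hfub : ∀ θ ∈ Set.Ioc (0:ℝ) θm, f θ ≤ t + s := by
    intro θ hθ
    have hd : dist (γ (θ * t)) (η (θ * s)) ≤ θ * t + θ * s := by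
      calc dist (γ (θ * t)) (η (θ * s)) ≤ dist (γ (θ * t)) x + dist x (η (θ * s)) :=
            dist_triangle _ _ _
        _ = θ * t + θ * s := by
            rw [dist_comm, hdγ θ hθ.1.le hθ.2, hdη θ hθ.1.le hθ.2]
    rw [hfdef, div_le_iff₀ hθ.1]
    nlinarith
  have hflb : ∀ θ ∈ Set.Ioc (0:ℝ) θm, |t - s| ≤ f θ := by
    intro θ hθ
    have hd : θ * |t - s| ≤ dist (γ (θ * t)) (η (θ * s)) := by
      have := abs_dist_sub_le (γ (θ * t)) (η (θ * s)) x
      rw [dist_comm (γ (θ * t)) x, dist_comm (η (θ * s)) x,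
        hdγ θ hθ.1.le hθ.2, hdη θ hθ.1.le hθ.2] at this
      calc θ * |t - s| = |θ * t - θ * s| := by
            rw [show θ * t - θ * s = θ * (t - s) by ring, abs_mul, abs_of_nonneg hθ.1.le]
        _ ≤ _ := this
    rw [hfdef, le_div_iff₀ hθ.1]
    linarith [hd]
  have hne : (f '' Set.Ioc (0:ℝ) θm).Nonempty := ⟨f θm, θm, ⟨hθm_pos, le_rfl⟩, rfl⟩
  have hbdd : BddAbove (f '' Set.Ioc (0:ℝ) θm) := by
    refine ⟨t + s, ?_⟩
    rintro y ⟨θ, hθ, rfl⟩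
    exact hfub θ hθ
  set L : ℝ := sSup (f '' Set.Ioc (0:ℝ) θm) with hLdef
  have hfleL : ∀ θ ∈ Set.Ioc (0:ℝ) θm, f θ ≤ L := fun θ hθ => le_csSup hbdd ⟨θ, hθ, rfl⟩
  have hL_le : L ≤ t + s := csSup_le hne (by rintro y ⟨θ, hθ, rfl⟩; exact hfub θ hθ)
  have hL_ge : |t - s| ≤ L :=
    (hflb θm ⟨hθm_pos, le_rfl⟩).trans (hfleL θm ⟨hθm_pos, le_rfl⟩)
  have hL0 : 0 ≤ L := (abs_nonneg _).trans hL_ge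
  have hLtend : Filter.Tendsto f (𝓝[>] (0:ℝ)) (𝓝 L) := by
    rw [tendsto_order]
    constructor
    · intro b hb
      obtain ⟨y, ⟨θ₀, hθ₀, rfl⟩, hby⟩ := exists_lt_of_lt_csSup hne hb
      filter_upwards [Ioo_mem_nhdsGT hθ₀.1] with θ hθ
      exact hby.trans_le (hmono θ θ₀ hθ.1 hθ.2.le hθ₀.2)
    · intro b hb
      filter_upwards [Ioo_mem_nhdsGT hθm_pos] with θ hθ
      exact (hfleL θ ⟨hθ.1, hθ.2.le⟩).trans_lt hb
  set φ : ℝ → ℝ := fun u => Real.arccos ((t ^ 2 + s ^ 2 - u ^ 2) / (2 * t * s)) with hφdef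
  have hφcont : Continuous φ := by
    apply Real.continuous_arccos.comp
    exact (continuous_const.sub (continuous_pow 2)).div_const _
  have harccos : ∀ u v : ℝ, u ≤ v → Real.arccos v ≤ Real.arccos u := by
    intro u v huv
    simp only [Real.arccos]
    linarith [Real.monotone_arcsin huv]
  have hφmono : ∀ u v : ℝ, 0 ≤ u → u ≤ v → φ u ≤ φ v := by
    intro u v hu huv
    apply harccos
    rw [div_le_div_iff₀ (by positivity) (by positivity)]
    nlinarith [mul_self_le_mul_self hu huv, mul_pos ht hs]
  set A : ℝ := φ L with hAdef
  have hgf : ∀ θ ∈ Set.Ioc (0:ℝ) θm,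
      compAngle (γ (θ * t)) x (η (θ * s)) = φ (f θ) := by
    intro θ hθ
    have hθ0 : θ ≠ 0 := hθ.1.ne'
    simp only [hφdef, hfdef, compAngle]
    rw [hdγ θ hθ.1.le hθ.2, hdη θ hθ.1.le hθ.2]
    congr 1
    field_simp
  have hAtend : Filter.Tendsto (fun θ => compAngle (γ (θ * t)) x (η (θ * s)))
      (𝓝[>] (0:ℝ)) (𝓝 A) := by
    refine ((hφcont.tendsto L).comp hLtend).congr' ?_
    filter_upwards [Ioo_mem_nhdsGT hθm_pos] with θ hθ
    exact (hgf θ ⟨hθ.1, hθ.2.le⟩).symm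
  have hlub : IsLUB ((fun θ => compAngle (γ (θ * t)) x (η (θ * s))) ''
      Set.Ioc (0:ℝ) θm) A := by
    constructor
    · rintro y ⟨θ, hθ, rfl⟩
      simp only
      rw [hgf θ hθ]
      exact hφmono (f θ) L (div_nonneg dist_nonneg hθ.1.le) (hfleL θ hθ)
    · intro b hb
      refine le_of_tendsto hAtend ?_
      filter_upwards [Ioo_mem_nhdsGT hθm_pos] with θ hθ
      exact hb ⟨θ, ⟨hθ.1, hθ.2.le⟩, rfl⟩
  have hLsq2 : (t - s) ^ 2 ≤ L ^ 2 := by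
    nlinarith [hL_ge, abs_nonneg (t - s), sq_abs (t - s)]
  have hc1 : -1 ≤ (t ^ 2 + s ^ 2 - L ^ 2) / (2 * t * s) := by
    rw [le_div_iff₀ (by positivity)]
    nlinarith
  have hc2 : (t ^ 2 + s ^ 2 - L ^ 2) / (2 * t * s) ≤ 1 := by
    rw [div_le_one (by positivity)]
    nlinarith
  have hLsq : L ^ 2 = t ^ 2 + s ^ 2 - 2 * t * s * Real.cos A := by
    rw [hAdef, hφdef]
    simp only
    rw [Real.cos_arccos hc1 hc2]
    field_simp
    ring
  refine ⟨A, L, hAtend, hlub, hLtend, hLsq, ?_⟩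
  intro lam hlam
  have hmap : Filter.Tendsto (fun θ : ℝ => θ * lam) (𝓝[>] (0:ℝ)) (𝓝[>] (0:ℝ)) := by
    apply tendsto_nhdsWithin_of_tendsto_nhds_of_eventually_within
    · have h0 : Filter.Tendsto (fun θ : ℝ => θ * lam) (𝓝 0) (𝓝 (0 * lam)) :=
        (continuous_id.mul continuous_const).tendsto 0
      rw [zero_mul] at h0
      exact h0.mono_left nhdsWithin_le_nhds
    · filter_upwards [self_mem_nhdsWithin] with θ hθ
      exact mul_pos hθ hlam
  refine (hAtend.comp hmap).congr fun θ => ?_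
  simp only [Function.comp_apply, mul_assoc]
end
end

section
/- Let X be a Busemann concave complete geodesic space whose metric is doubling with constant N. For every ε > 0 there exists N₀ ∈ ℕ, depending only on N and ε, with the following property: for every x ∈ X, every l > 0, and every finite family γ₁, …, γ_m : [0, l] → X of unit-speed geodesics with γ_i 0 = x such that the angle of common scale satisfies ∠_x(γ_i(l), γ_j(l)) ≥ ε for all i ≠ j, one has m ≤ N₀. -/
open Set Metric MeasureTheory Filter Topology

noncomputable section

variable {X : Type*} [MetricSpace X]

/-- Iterated doubling covering: a ball of radius `r` can be covered by `N ^ k`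
balls of radius `r / 2 ^ k`. -/
lemma doubling_iter {X : Type} [MetricSpace X] {N : ℕ} (hD : MetricDoubling X N) :
    ∀ (k : ℕ) (x : X) (r : ℝ), 0 < r → ∃ t : Finset X,
      (Metric.ball x r ⊆ ⋃ y ∈ t, Metric.ball y (r / 2 ^ k)) ∧ t.card ≤ N ^ k := by
  classical
  intro k
  induction k with
  | zero =>
    intro x r hr
    exact ⟨{x}, by simp, by simp⟩
  | succ k ih =>
    intro x r hr
    obtain ⟨t, ht, hcard⟩ := hD x r hr
    choose f hf hfc using fun y : X => ih y (r / 2) (by positivity)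
    refine ⟨t.biUnion f, ?_, ?_⟩
    · intro z hz
      have h1 := ht hz
      simp only [Set.mem_iUnion] at h1
      obtain ⟨y, hy, hzy⟩ := h1
      have h2 := hf y hzy
      simp only [Set.mem_iUnion] at h2 ⊢
      obtain ⟨w, hw, hzw⟩ := h2
      refine ⟨w, Finset.mem_biUnion.2 ⟨y, hy, hw⟩, ?_⟩
      have he : r / 2 / 2 ^ k = r / 2 ^ (k + 1) := by ring
      rwa [he] at hzw
    · calc (t.biUnion f).card ≤ ∑ y ∈ t, (f y).card := Finset.card_biUnion_le
        _ ≤ ∑ _y ∈ t, N ^ k := Finset.sum_le_sum fun y _ => hfc y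
        _ = t.card * N ^ k := by rw [Finset.sum_const, smul_eq_mul]
        _ ≤ N * N ^ k := Nat.mul_le_mul_right _ hcard
        _ = N ^ (k + 1) := by ring

/-- bound on a real `biSup` over `Ioc 0 1`. -/
lemma real_biSup_Ioc_le {f : ℝ → ℝ} {a : ℝ} (ha : 0 ≤ a)
    (h : ∀ θ ∈ Set.Ioc (0:ℝ) 1, f θ ≤ a) :
    (⨆ θ ∈ Set.Ioc (0:ℝ) 1, f θ) ≤ a :=
  Real.iSup_le (fun θ => Real.iSup_le (fun hθ => h θ hθ) ha) ha

/-- `arccos` is antitone. -/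
lemma arccos_antitone {x y : ℝ} (h : x ≤ y) : Real.arccos y ≤ Real.arccos x := by
  rw [Real.arccos_eq_pi_div_two_sub_arcsin, Real.arccos_eq_pi_div_two_sub_arcsin]
  have := Real.monotone_arcsin h
  linarith

/-- uniform compactness of the spaces of directions with common
length: an `ε`-separated (in the angle of common scale) family of unit-speed
geodesics from a point has cardinality bounded in terms of the doubling
constant and `ε` only. -/
theorem stmt_14 (N : ℕ) (ε : ℝ) (hε : 0 < ε) :
    ∃ N₀ : ℕ, ∀ (X : Type) [MetricSpace X] [CompleteSpace X],
      IsGeodesicSpace X → BusemannConcave X → MetricDoubling X N →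
      ∀ (x : X) (l : ℝ), 0 < l → ∀ (m : ℕ) (γ : Fin m → ℝ → X),
        (∀ i, IsUnitSpeedGeodesicOn (γ i) 0 l ∧ γ i 0 = x) →
        (∀ i j, i ≠ j →
          ε ≤ ⨆ θ ∈ Set.Ioc (0 : ℝ) 1, compAngle (γ i (θ * l)) x (γ j (θ * l))) →
        m ≤ N₀ := by
  classical
  have hε₀pos : 0 < min ε 1 := lt_min hε zero_lt_one
  have hε₀le1 : min ε 1 ≤ 1 := min_le_right _ _
  have hε₀leε : min ε 1 ≤ ε := min_le_left _ _
  set ε₀ : ℝ := min ε 1 with hε₀def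
  have hpi : (3:ℝ) < Real.pi := Real.pi_gt_three
  have hcoslt : Real.cos (ε₀ / 2) < 1 := by
    have h := Real.cos_lt_cos_of_nonneg_of_le_pi (le_refl 0)
      (by linarith : ε₀ / 2 ≤ Real.pi) (by linarith : (0:ℝ) < ε₀ / 2)
    simpa using h
  set c : ℝ := Real.sqrt (2 * (1 - Real.cos (ε₀ / 2))) with hcdef
  have hcpos : 0 < c := Real.sqrt_pos.2 (by linarith)
  have hcsq : c ^ 2 = 2 * (1 - Real.cos (ε₀ / 2)) := Real.sq_sqrt (by linarith)
  obtain ⟨k, hk⟩ := pow_unbounded_of_one_lt (4 / c) (by norm_num : (1:ℝ) < 2)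
  refine ⟨max 1 (N ^ k), ?_⟩
  intro X _ _ _hgeo hBus hD x l hl m γ hγ hsep
  rcases le_or_gt m 1 with hm1 | hm1
  · exact hm1.trans (le_max_left _ _)
  have hm0 : 0 < m := by omega
  -- membership helper
  have hmem : ∀ u : ℝ, 0 ≤ u → u ≤ 1 → u * l ∈ Set.Icc (0:ℝ) l := by
    intro u h0 h1
    exact ⟨mul_nonneg h0 hl.le, mul_le_of_le_one_left hl.le h1⟩
  -- distance from the base point
  have hdx : ∀ (i : Fin m) (u : ℝ), 0 ≤ u → u ≤ 1 → dist x (γ i (u * l)) = u * l := by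
    intro i u hu0 hu1
    have h := (hγ i).1 0 ⟨le_refl 0, hl.le⟩ (u * l) (hmem u hu0 hu1)
    rw [(hγ i).2] at h
    rw [h, zero_sub, abs_neg, abs_of_nonneg (mul_nonneg hu0 hl.le)]
  -- reparametrized geodesics are constant-speed on [0,1]
  have hconst : ∀ i, IsConstSpeedGeodesic (fun t => γ i (t * l)) := by
    intro i s hs t ht
    show dist (γ i (s * l)) (γ i (t * l)) = |s - t| * dist (γ i (0 * l)) (γ i (1 * l))
    rw [(hγ i).1 (s * l) (hmem s hs.1 hs.2) (t * l) (hmem t ht.1 ht.2),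
      (hγ i).1 (0 * l) (hmem 0 le_rfl zero_le_one) (1 * l) (hmem 1 zero_le_one le_rfl),
      show s * l - t * l = (s - t) * l by ring, show (0:ℝ) * l - 1 * l = -l by ring,
      abs_mul, abs_neg, abs_of_nonneg hl.le]
  -- for each pair, a scale at which the points are definitely separated
  have hpair : ∀ i j : Fin m, ∃ θ : ℝ, θ ∈ Set.Ioc (0:ℝ) 1 ∧
      (i ≠ j → θ * l * c < dist (γ i (θ * l)) (γ j (θ * l))) := by
    intro i j
    by_cases hij : i = j
    · exact ⟨1, ⟨zero_lt_one, le_refl 1⟩, fun h => absurd hij h⟩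
    · have hex : ∃ θ ∈ Set.Ioc (0:ℝ) 1,
          ε₀ / 2 < compAngle (γ i (θ * l)) x (γ j (θ * l)) := by
        by_contra hcon
        push_neg at hcon
        have hb : (⨆ θ ∈ Set.Ioc (0:ℝ) 1, compAngle (γ i (θ * l)) x (γ j (θ * l)))
            ≤ ε₀ / 2 := real_biSup_Ioc_le (by linarith) hcon
        have := hsep i j hij
        linarith
      obtain ⟨θ, hθ, hang⟩ := hex
      refine ⟨θ, hθ, fun _ => ?_⟩
      have hdi := hdx i θ hθ.1.le hθ.2
      have hdj := hdx j θ hθ.1.le hθ.2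
      set a : ℝ := θ * l with hadef
      have ha : 0 < a := mul_pos hθ.1 hl
      set d : ℝ := dist (γ i (θ * l)) (γ j (θ * l)) with hddef
      have hQ : (a ^ 2 + a ^ 2 - d ^ 2) / (2 * a * a) < Real.cos (ε₀ / 2) := by
        by_contra hQc
        push_neg at hQc
        have h1 : compAngle (γ i (θ * l)) x (γ j (θ * l)) ≤ ε₀ / 2 := by
          unfold compAngle
          rw [hdi, hdj]
          calc Real.arccos ((a ^ 2 + a ^ 2 - d ^ 2) / (2 * a * a))
              ≤ Real.arccos (Real.cos (ε₀ / 2)) := arccos_antitone hQc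
            _ = ε₀ / 2 := Real.arccos_cos (by linarith) (by linarith)
        linarith
      have hd2 : (a * c) ^ 2 < d ^ 2 := by
        rw [div_lt_iff₀ (by positivity)] at hQ
        nlinarith [hcsq]
      have : a * c < d := lt_of_pow_lt_pow_left₀ 2 dist_nonneg hd2
      calc θ * l * c = a * c := by rw [hadef]
        _ < d := this
  choose θf hθf hdθ using hpair
  have hne : (Finset.univ : Finset (Fin m × Fin m)).Nonempty :=
    ⟨(⟨0, hm0⟩, ⟨0, hm0⟩), Finset.mem_univ _⟩
  set s : ℝ := Finset.univ.inf' hne (fun p : Fin m × Fin m => θf p.1 p.2) with hsdef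
  have hsle : ∀ i j : Fin m, s ≤ θf i j := fun i j =>
    Finset.inf'_le _ (Finset.mem_univ (i, j))
  have hs0 : 0 < s :=
    (Finset.lt_inf'_iff hne).2 fun p _ => (hθf p.1 p.2).1
  have hs1 : s ≤ 1 := le_trans (hsle ⟨0, hm0⟩ ⟨0, hm0⟩) (hθf ⟨0, hm0⟩ ⟨0, hm0⟩).2
  -- separation at the common scale s, via Busemann concavity
  have hsep' : ∀ i j : Fin m, i ≠ j →
      s * l * c < dist (γ i (s * l)) (γ j (s * l)) := by
    intro i j hij
    have hθ := hθf i j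
    have hd := hdθ i j hij
    have hB := hBus (fun t => γ i (t * l)) (fun t => γ j (t * l)) (hconst i) (hconst j)
      (by simp only [zero_mul]; rw [(hγ i).2, (hγ j).2]) s (θf i j) hs0 (hsle i j) hθ.2
    have h2 : l * c < dist (γ i (θf i j * l)) (γ j (θf i j * l)) / θf i j := by
      rw [lt_div_iff₀ hθ.1]
      nlinarith
    have h3 : l * c < dist (γ i (s * l)) (γ j (s * l)) / s := lt_of_lt_of_le h2 hB
    rw [lt_div_iff₀ hs0] at h3
    nlinarith
  -- counting via the doubling property
  set r : ℝ := s * l with hrdef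
  have hr : 0 < r := mul_pos hs0 hl
  obtain ⟨t, ht, htc⟩ := doubling_iter hD k x (2 * r) (by linarith)
  have hyb : ∀ i : Fin m, γ i (s * l) ∈ Metric.ball x (2 * r) := by
    intro i
    rw [Metric.mem_ball, dist_comm, hdx i s hs0.le hs1]
    simpa [hrdef] using by linarith
  have hchoose : ∀ i : Fin m, ∃ yc, yc ∈ t ∧ γ i (s * l) ∈ Metric.ball yc (2 * r / 2 ^ k) := by
    intro i
    have h := ht (hyb i)
    simpa [Set.mem_iUnion] using h
  choose g hg hgball using hchoose
  have h2k : (0:ℝ) < 2 ^ k := by positivity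
  have hrad : 2 * (2 * r / 2 ^ k) ≤ c * r := by
    rw [div_lt_iff₀ hcpos] at hk
    rw [show 2 * (2 * r / 2 ^ k) = 4 * r / 2 ^ k from by ring, div_le_iff₀ h2k]
    nlinarith
  have hinj : Set.InjOn g ↑(Finset.univ : Finset (Fin m)) := by
    intro i _ j _ hgij
    by_contra hij
    have h1 := hgball i
    have h2 := hgball j
    rw [Metric.mem_ball] at h1 h2
    have h2' : dist (g i) (γ j (s * l)) < 2 * r / 2 ^ k := by
      rw [hgij, dist_comm]; exact h2
    have htri : dist (γ i (s * l)) (γ j (s * l)) < 2 * (2 * r / 2 ^ k) := by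
      have := dist_triangle (γ i (s * l)) (g i) (γ j (s * l))
      linarith
    have := hsep' i j hij
    nlinarith
  have hcard := Finset.card_le_card_of_injOn g (fun i _ => hg i) hinj
  rw [Finset.card_univ, Fintype.card_fin] at hcard
  exact le_trans hcard (le_trans htc (le_max_right 1 (N ^ k)))
end
end
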